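/- arXiv:math/0503677 — 8 statements merged into one kernel-verified Lean document; each statement's English description precedes it below -/
import Mathlib

section
/- Let I ⊆ ℝ, let f = (f_1,…,f_m)ᵀ with f_i : I → ℝ, and suppose c* ∈ ℝ^m \ {0} and points s_1 < ⋯ < s_m in I satisfy c*ᵀ f(s_i) = (−1)^i for i = 1,…,m, and that the matrix F = (f_i(s_j))_{i,j=1}^m is invertible. Put J = diag(−1, 1, …, (−1)^m) and w = J F⁻¹ c* / ‖c*‖₂². Then Σ_{i=1}^m w_i = 1, and the matrix M = Σ_{i=1}^m w_i f(s_i) f(s_i)ᵀ satisfies M c* = c* / ‖c*‖₂²; in particular c* is an eigenvector of M with eigenvalue 1/‖c*‖₂². -/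
open Matrix Finset

/-- If `c* ⬝ f(sᵢ) = (−1)^i` at points `s₁ < ⋯ < s_m` of `I` and
`F = (fᵢ(sⱼ))` is invertible, then the weights `w = J F⁻¹ c* / ‖c*‖²` sum to one
and `M = Σ wᵢ f(sᵢ) f(sᵢ)ᵀ` satisfies `M c* = c*/‖c*‖²`. -/
theorem stmt0 (m : ℕ) (hm : 1 ≤ m) (I : Set ℝ) (f : ℝ → Fin m → ℝ)
    (cstar : Fin m → ℝ) (hcs : cstar ≠ 0)
    (s : Fin m → ℝ) (hs : StrictMono s) (hsI : ∀ i, s i ∈ I)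
    (hosc : ∀ i : Fin m, cstar ⬝ᵥ f (s i) = (-1 : ℝ) ^ (i.val + 1))
    (F : Matrix (Fin m) (Fin m) ℝ) (hF : F = Matrix.of fun i j => f (s j) i)
    (hFinv : IsUnit F.det)
    (J : Matrix (Fin m) (Fin m) ℝ)
    (hJ : J = Matrix.diagonal fun i : Fin m => (-1 : ℝ) ^ (i.val + 1))
    (w : Fin m → ℝ)
    (hw : w = (∑ i, (cstar i) ^ 2)⁻¹ • ((J * F⁻¹).mulVec cstar)) :
    (∑ i, w i = 1) ∧
    (∑ i, w i • Matrix.vecMulVec (f (s i)) (f (s i))).mulVec cstar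
      = (∑ i, (cstar i) ^ 2)⁻¹ • cstar := by
  set N : ℝ := (∑ i, (cstar i) ^ 2)⁻¹ with hN
  set u : Fin m → ℝ := F⁻¹.mulVec cstar with hu
  have hNsum : (∑ i, (cstar i) ^ 2) ≠ 0 := by
    intro h
    apply hcs
    funext i
    have h1 : ∀ j ∈ Finset.univ, (0:ℝ) ≤ (cstar j)^2 := fun j _ => sq_nonneg _
    have := (Finset.sum_eq_zero_iff_of_nonneg h1).mp h i (Finset.mem_univ i)
    exact pow_eq_zero_iff (n := 2) (by norm_num) |>.mp this
  have hFu : F.mulVec u = cstar := by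
    rw [hu, Matrix.mulVec_mulVec, Matrix.mul_nonsing_inv F hFinv, Matrix.one_mulVec]
  have hwi : ∀ i, w i = N * ((-1 : ℝ) ^ (i.val + 1) * u i) := by
    intro i
    rw [hw, hJ]
    simp [Matrix.mulVec, Matrix.mul_apply, Matrix.diagonal, Finset.mul_sum,
      dotProduct, hu, mul_assoc]
  have hsq : ∀ i : Fin m, ((-1 : ℝ) ^ (i.val + 1)) * ((-1 : ℝ) ^ (i.val + 1)) = 1 := by
    intro i; rw [← mul_pow]; norm_num
  have hdot : ∀ i, f (s i) ⬝ᵥ cstar = (-1 : ℝ) ^ (i.val + 1) := by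
    intro i; rw [dotProduct_comm]; exact hosc i
  -- key identity: ∑ i, (-1)^(i+1) * u i = ∑ i, cstar i ^ 2
  have hkey : ∑ i, (-1 : ℝ) ^ (i.val + 1) * u i = ∑ i, (cstar i) ^ 2 := by
    have h1 : ∑ i, (cstar i) ^ 2 = cstar ⬝ᵥ (F.mulVec u) := by
      rw [hFu]; simp [dotProduct, sq]
    rw [h1, Matrix.dotProduct_mulVec]
    congr 1
    funext i
    have : (cstar ᵥ* F) i = cstar ⬝ᵥ f (s i) := by
      simp [Matrix.vecMul, dotProduct, hF]
    rw [this, hosc i]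
  constructor
  · calc ∑ i, w i = N * ∑ i, (-1 : ℝ) ^ (i.val + 1) * u i := by
          rw [Finset.mul_sum]; exact Finset.sum_congr rfl fun i _ => hwi i
      _ = 1 := by rw [hkey, hN, inv_mul_cancel₀ hNsum]
  · funext j
    have hL : (∑ i, w i • Matrix.vecMulVec (f (s i)) (f (s i))).mulVec cstar j
        = ∑ i, w i * (f (s i) j * (f (s i) ⬝ᵥ cstar)) := by
      simp only [Matrix.mulVec, dotProduct, Matrix.sum_apply,
        Matrix.smul_apply, Matrix.vecMulVec_apply, smul_eq_mul, Finset.sum_mul]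
      rw [Finset.sum_comm]
      exact Finset.sum_congr rfl fun i _ => by
        simp [Finset.mul_sum, mul_assoc]
    rw [hL]
    have : ∀ i : Fin m, w i * (f (s i) j * (f (s i) ⬝ᵥ cstar)) = N * (u i * f (s i) j) := by
      intro i
      rw [hdot i, hwi i]
      calc N * ((-1:ℝ) ^ (i.val + 1) * u i) * (f (s i) j * (-1:ℝ) ^ (i.val + 1))
          = N * (u i * f (s i) j) * ((-1:ℝ) ^ (i.val + 1) * (-1:ℝ) ^ (i.val + 1)) := by
            ring
        _ = N * (u i * f (s i) j) := by rw [hsq i, mul_one]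
    rw [Finset.sum_congr rfl fun i _ => this i, ← Finset.mul_sum]
    have hFj : ∑ i, u i * f (s i) j = cstar j := by
      have := congrFun hFu j
      simp only [Matrix.mulVec, dotProduct, hF, Matrix.of_apply] at this
      rw [← this]
      exact Finset.sum_congr rfl fun i _ => mul_comm _ _
    rw [hFj]
    simp [hN]
end

section
/- Let I ⊆ ℝ, f = (f_1,…,f_m)ᵀ with f_i : I → ℝ, and suppose c* ∈ ℝ^m \ {0} and points s_1 < ⋯ < s_m in I satisfy c*ᵀ f(s_i) = (−1)^i for i = 1,…,m and |c*ᵀ f(t)| ≤ 1 for all t ∈ I, and that F = (f_i(s_j))_{i,j=1}^m is invertible. Put J = diag(−1,1,…,(−1)^m) and w = J F⁻¹ c* / ‖c*‖₂², assume all w_i ≥ 0, and let ξ_{c*} be the design assigning mass w_i to s_i. If 1/‖c*‖₂² is the smallest eigenvalue of M(ξ_{c*}), then ξ_{c*} is E-optimal: for every design η on I, λ_min(M(η)) ≤ λ_min(M(ξ_{c*})) = 1/‖c*‖₂². -/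
open Matrix Finset

/-- A design: a probability measure with finite support on `ℝ`. -/
structure Design where
  support : Finset ℝ
  weight : ℝ → ℝ
  pos : ∀ t ∈ support, 0 < weight t
  zero : ∀ t ∉ support, weight t = 0
  sum_one : ∑ t ∈ support, weight t = 1

/-- Information matrix `M(ξ) = Σ ξ({t}) f(t) f(t)ᵀ` of a design. -/
noncomputable def Design.infoMatrix {m : ℕ} (ξ : Design) (f : ℝ → Fin m → ℝ) :
    Matrix (Fin m) (Fin m) ℝ :=
  ∑ t ∈ ξ.support, ξ.weight t • Matrix.vecMulVec (f t) (f t)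

def IsEigenvalue {m : ℕ} (M : Matrix (Fin m) (Fin m) ℝ) (r : ℝ) : Prop :=
  ∃ v : Fin m → ℝ, v ≠ 0 ∧ M.mulVec v = r • v

noncomputable def lambdaMin {m : ℕ} (M : Matrix (Fin m) (Fin m) ℝ) : ℝ :=
  sInf {r | IsEigenvalue M r}

/-! The Rayleigh quotient at `c*` does all the work. For a design `η` on `I`,
`c*ᵀ M(η) c* = Σ η(t) (c*ᵀ f(t))² ≤ Σ η(t) = 1` because `|c*ᵀ f| ≤ 1` on `I`. As `M(η)` is positive
semidefinite, its smallest eigenvalue is at most `c*ᵀ M(η) c* / ‖c*‖² ≤ 1 / ‖c*‖²`, which by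
assumption is the smallest eigenvalue of `M(ξ_{c*})`. -/

namespace Matrix.IsHermitian

variable {n : Type*} [Fintype n] [DecidableEq n] {A : Matrix n n ℝ}

theorem mul_dotProduct_self_le_dotProduct_mulVec (hA : A.IsHermitian) {μ : ℝ}
    (hμ : ∀ i, μ ≤ hA.eigenvalues i) (v : n → ℝ) : μ * (v ⬝ᵥ v) ≤ v ⬝ᵥ A *ᵥ v := by
  set d := hA.eigenvalues
  set U : Matrix n n ℝ := (hA.eigenvectorUnitary : Matrix n n ℝ)
  set w := star U *ᵥ v
  have hvU : v ᵥ* U = w := by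
    rw [← mulVec_transpose, ← conjTranspose_eq_transpose_of_trivial, ← star_eq_conjTranspose]
  have hA' : A = U * diagonal d * star U := by
    simpa [RCLike.ofReal_real_eq_id] using hA.spectral_theorem
  have hquad : v ⬝ᵥ A *ᵥ v = ∑ i, d i * w i ^ 2 := by
    rw [hA', ← mulVec_mulVec, ← mulVec_mulVec, dotProduct_mulVec, hvU]
    simp only [dotProduct, mulVec_diagonal]
    exact Finset.sum_congr rfl fun i _ => by ring
  have hnorm : v ⬝ᵥ v = ∑ i, w i ^ 2 := by
    have hUU : U * star U = 1 := mem_unitaryGroup_iff.mp hA.eigenvectorUnitary.2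
    calc v ⬝ᵥ v = v ᵥ* U ⬝ᵥ w := by
          rw [← dotProduct_mulVec, mulVec_mulVec, hUU, one_mulVec]
      _ = ∑ i, w i ^ 2 := by simp only [hvU, dotProduct, sq]
  rw [hquad, hnorm, Finset.mul_sum]
  exact Finset.sum_le_sum fun i _ => mul_le_mul_of_nonneg_right (hμ i) (sq_nonneg _)

end Matrix.IsHermitian

section Eigenvalues

variable {m : ℕ} {A : Matrix (Fin m) (Fin m) ℝ}

theorem IsEigenvalue.nonneg_of_posSemidef (hA : A.PosSemidef) {r : ℝ} (hr : IsEigenvalue A r) :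
    0 ≤ r := by
  obtain ⟨v, hv, hAv⟩ := hr
  have hvv : 0 < v ⬝ᵥ v := by simpa using dotProduct_star_self_pos_iff.mpr hv
  have hquad : 0 ≤ r * (v ⬝ᵥ v) := by
    simpa [hAv, dotProduct_smul] using hA.dotProduct_mulVec_nonneg v
  exact nonneg_of_mul_nonneg_left hquad hvv

theorem exists_isEigenvalue_mul_dotProduct_self_le (hA : A.IsHermitian) {v : Fin m → ℝ}
    (hv : v ≠ 0) : ∃ r, IsEigenvalue A r ∧ r * (v ⬝ᵥ v) ≤ v ⬝ᵥ A *ᵥ v := by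
  obtain ⟨i₀, -⟩ := Function.ne_iff.mp hv
  have : Nonempty (Fin m) := ⟨i₀⟩
  obtain ⟨i, hi⟩ := Finite.exists_min hA.eigenvalues
  refine ⟨hA.eigenvalues i, ⟨hA.eigenvectorBasis i, ?_, hA.mulVec_eigenvectorBasis i⟩,
    hA.mul_dotProduct_self_le_dotProduct_mulVec hi v⟩
  exact fun h => hA.eigenvectorBasis.orthonormal.ne_zero i (by ext j; exact congrFun h j)

theorem lambdaMin_mul_dotProduct_self_le (hA : A.PosSemidef) {v : Fin m → ℝ} (hv : v ≠ 0) :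
    lambdaMin A * (v ⬝ᵥ v) ≤ v ⬝ᵥ A *ᵥ v := by
  obtain ⟨r, hr, hle⟩ := exists_isEigenvalue_mul_dotProduct_self_le hA.1 hv
  have hbdd : BddBelow {r | IsEigenvalue A r} := ⟨0, fun _ h => h.nonneg_of_posSemidef hA⟩
  calc lambdaMin A * (v ⬝ᵥ v) ≤ r * (v ⬝ᵥ v) :=
        mul_le_mul_of_nonneg_right (csInf_le hbdd hr) (by simpa using dotProduct_star_self_nonneg v)
    _ ≤ v ⬝ᵥ A *ᵥ v := hle

end Eigenvalues

namespace Design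

variable {m : ℕ} (η : Design) (f : ℝ → Fin m → ℝ)

theorem infoMatrix_posSemidef : (η.infoMatrix f).PosSemidef :=
  posSemidef_sum _ fun t ht => by
    simpa using (posSemidef_vecMulVec_self_star (f t)).smul (η.pos t ht).le

theorem dotProduct_infoMatrix_mulVec_self (v : Fin m → ℝ) :
    v ⬝ᵥ η.infoMatrix f *ᵥ v = ∑ t ∈ η.support, η.weight t * (f t ⬝ᵥ v) ^ 2 := by
  simp only [infoMatrix, sum_mulVec, dotProduct_sum, smul_mulVec, vecMulVec_mulVec, dotProduct_smul]
  refine Finset.sum_congr rfl fun t _ => ?_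
  rw [op_smul_eq_mul, smul_eq_mul, dotProduct_comm v]
  ring

theorem dotProduct_infoMatrix_mulVec_self_le_one {I : Set ℝ} (hη : ↑η.support ⊆ I)
    {c : Fin m → ℝ} (hc : ∀ t ∈ I, |c ⬝ᵥ f t| ≤ 1) : c ⬝ᵥ η.infoMatrix f *ᵥ c ≤ 1 := by
  rw [dotProduct_infoMatrix_mulVec_self, ← η.sum_one]
  refine Finset.sum_le_sum fun t ht => mul_le_of_le_one_right (η.pos t ht).le ?_
  rw [sq_le_one_iff_abs_le_one, dotProduct_comm]
  exact hc t (hη ht)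

theorem lambdaMin_infoMatrix_le {I : Set ℝ} (hη : ↑η.support ⊆ I) {c : Fin m → ℝ} (hc0 : c ≠ 0)
    (hc : ∀ t ∈ I, |c ⬝ᵥ f t| ≤ 1) : lambdaMin (η.infoMatrix f) ≤ (c ⬝ᵥ c)⁻¹ := by
  have hcc : 0 < c ⬝ᵥ c := by simpa using dotProduct_star_self_pos_iff.mpr hc0
  rw [← mul_one (c ⬝ᵥ c)⁻¹, le_inv_mul_iff₀' hcc]
  exact (lambdaMin_mul_dotProduct_self_le (η.infoMatrix_posSemidef f) hc0).trans
    (η.dotProduct_infoMatrix_mulVec_self_le_one f hη hc)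

end Design

theorem stmt1_general (m : ℕ) (I : Set ℝ) (f : ℝ → Fin m → ℝ)
    (cstar : Fin m → ℝ) (hcs : cstar ≠ 0)
    (hbound : ∀ t ∈ I, |cstar ⬝ᵥ f t| ≤ 1)
    (Mstar : Matrix (Fin m) (Fin m) ℝ)
    (hleast : IsLeast {r | IsEigenvalue Mstar r} ((∑ i, (cstar i) ^ 2)⁻¹)) :
    lambdaMin Mstar = (∑ i, (cstar i) ^ 2)⁻¹ ∧
      ∀ η : Design, ↑η.support ⊆ I → lambdaMin (η.infoMatrix f) ≤ lambdaMin Mstar := by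
  have hmin : lambdaMin Mstar = (∑ i, (cstar i) ^ 2)⁻¹ := hleast.csInf_eq
  refine ⟨hmin, fun η hη => ?_⟩
  have hnorm : ∑ i, cstar i ^ 2 = cstar ⬝ᵥ cstar := by simp only [dotProduct, sq]
  rw [hmin, hnorm]
  exact η.lambdaMin_infoMatrix_le f hη hcs hbound

/-- under equioscillation, boundedness `|c*ᵀ f| ≤ 1` on `I`,
nonnegative Chebyshev weights, and the assumption that `1/‖c*‖²` is the smallest
eigenvalue of `M(ξ_{c*})`, the design `ξ_{c*}` is E-optimal. -/
theorem stmt1 (m : ℕ) (hm : 1 ≤ m) (I : Set ℝ) (f : ℝ → Fin m → ℝ)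
    (cstar : Fin m → ℝ) (hcs : cstar ≠ 0)
    (s : Fin m → ℝ) (hs : StrictMono s) (hsI : ∀ i, s i ∈ I)
    (hbound : ∀ t ∈ I, |cstar ⬝ᵥ f t| ≤ 1)
    (hosc : ∀ i : Fin m, cstar ⬝ᵥ f (s i) = (-1 : ℝ) ^ (i.val + 1))
    (F : Matrix (Fin m) (Fin m) ℝ) (hF : F = Matrix.of fun i j => f (s j) i)
    (hFinv : IsUnit F.det)
    (J : Matrix (Fin m) (Fin m) ℝ)
    (hJ : J = Matrix.diagonal fun i : Fin m => (-1 : ℝ) ^ (i.val + 1))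
    (w : Fin m → ℝ)
    (hw : w = (∑ i, (cstar i) ^ 2)⁻¹ • ((J * F⁻¹).mulVec cstar))
    (hwpos : ∀ i, 0 ≤ w i)
    (Mstar : Matrix (Fin m) (Fin m) ℝ)
    (hM : Mstar = ∑ i, w i • Matrix.vecMulVec (f (s i)) (f (s i)))
    (hleast : IsLeast {r | IsEigenvalue Mstar r} ((∑ i, (cstar i) ^ 2)⁻¹)) :
    lambdaMin Mstar = (∑ i, (cstar i) ^ 2)⁻¹ ∧
      ∀ η : Design, ↑η.support ⊆ I → lambdaMin (η.infoMatrix f) ≤ lambdaMin Mstar :=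
  stmt1_general m I f cstar hcs hbound Mstar hleast
end

section
/- Let I ⊆ ℝ be a bounded interval or an interval contained in [0,∞), let s ≥ 0, k ≥ 1, m = s+2k, and let b = (b_1,…,b_k) ∈ ℬ, i.e., the b_i are pairwise distinct and b_i ∉ I for all i. Then the functions f_1(·,b),…,f_m(·,b) of the rational system form a Chebyshev system on I: there is ε ∈ {−1,1} such that ε·det(f_i(t_j,b))_{i,j=1}^m > 0 for all t_1 < ⋯ < t_m in I. -/
/-!
Multiplying the rational system by the common denominator `Q(t)² = ∏ᵣ (t - bᵣ)²` turns it into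
`s + 2k` polynomials of degree `< s + 2k`. They are linearly independent: evaluating a vanishing
combination at `b_q` kills the coefficient of `1/(t-b_q)²`, differentiating at `b_q` then kills
that of `1/(t-b_q)`, and what is left is a polynomial multiple of `Q²`. Hence no nontrivial
combination vanishes at `s + 2k` distinct points, so the determinant never vanishes on increasing
tuples from `I`. Those tuples form a convex set on which the determinant is continuous (the poles
lie outside `I`), so it has constant sign.
-/

open Matrix Finset

/-- The rational system: `t^{i−1}` for `i = 1,…,s` followed, for each `i = 1,…,k`,
by `1/(t−bᵢ)` and `1/(t−bᵢ)²`. -/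
noncomputable def fRat (s k : ℕ) (b : Fin k → ℝ) (i : Fin (s + 2 * k)) (t : ℝ) : ℝ :=
  if hi : i.val < s then t ^ i.val
  else
    let q : Fin k := ⟨(i.val - s) / 2, by have := i.isLt; omega⟩
    if (i.val - s) % 2 = 0 then (t - b q)⁻¹ else ((t - b q) ^ 2)⁻¹

def IsChebyshevSystem {n : ℕ} (g : Fin n → ℝ → ℝ) (I : Set ℝ) : Prop :=
  ∃ ε : ℝ, (ε = 1 ∨ ε = -1) ∧ ∀ x : Fin n → ℝ, StrictMono x → (∀ j, x j ∈ I) →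
    0 < ε * (Matrix.of fun i j => g i (x j)).det

theorem IsPreconnected.exists_sign_mul_pos {α : Type*} [TopologicalSpace α] {S : Set α}
    {f : α → ℝ} (hS : IsPreconnected S) (hf : ContinuousOn f S) (hf0 : ∀ x ∈ S, f x ≠ 0) :
    ∃ ε : ℝ, (ε = 1 ∨ ε = -1) ∧ ∀ x ∈ S, 0 < ε * f x := by
  by_cases hpos : ∃ x ∈ S, 0 < f x
  · obtain ⟨x, hx, hfx⟩ := hpos
    refine ⟨1, Or.inl rfl, fun y hy => ?_⟩
    rw [one_mul]
    by_contra! hfy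
    obtain ⟨z, hz, hfz⟩ := hS.intermediate_value hy hx hf ⟨hfy, hfx.le⟩
    exact hf0 z hz hfz
  · simp only [not_exists, not_and, not_lt] at hpos
    exact ⟨-1, Or.inr rfl, fun y hy => by
      linarith [lt_of_le_of_ne (hpos y hy) (hf0 y hy)]⟩

theorem convex_setOf_strictMono {ι : Type*} [Preorder ι] :
    Convex ℝ {x : ι → ℝ | StrictMono x} := by
  intro x hx y hy a a' ha ha' haa i j hij
  simp only [Pi.add_apply, Pi.smul_apply, smul_eq_mul]
  rcases ha.eq_or_lt with rfl | ha
  · rw [zero_add] at haa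
    simpa [haa] using hy hij
  · exact add_lt_add_of_lt_of_le (mul_lt_mul_of_pos_left (hx hij) ha)
      (mul_le_mul_of_nonneg_left (hy hij).le ha')

theorem IsChebyshevSystem.of_det_ne_zero {n : ℕ} {g : Fin n → ℝ → ℝ} {I : Set ℝ}
    (hI : I.OrdConnected) (hg : ∀ i, ContinuousOn (g i) I)
    (hdet : ∀ x : Fin n → ℝ, StrictMono x → (∀ j, x j ∈ I) →
      (Matrix.of fun i j => g i (x j)).det ≠ 0) :
    IsChebyshevSystem g I := by
  set S : Set (Fin n → ℝ) := {x | StrictMono x} ∩ Set.univ.pi fun _ => I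
  have hS : IsPreconnected S :=
    (convex_setOf_strictMono.inter (convex_pi fun _ _ => hI.convex)).isPreconnected
  have hcont : ContinuousOn (fun x : Fin n → ℝ => (Matrix.of fun i j => g i (x j)).det) S :=
    continuous_id.matrix_det.comp_continuousOn <| continuousOn_pi.2 fun i =>
      continuousOn_pi.2 fun j => (hg i).comp (continuous_apply j).continuousOn fun x hx => hx.2 j (Set.mem_univ j)
  obtain ⟨ε, hε, hpos⟩ := hS.exists_sign_mul_pos hcont fun x hx =>
    hdet x hx.1 fun j => hx.2 j (Set.mem_univ j)
  exact ⟨ε, hε, fun x hx hxI => hpos x ⟨hx, fun j _ => hxI j⟩⟩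

open Polynomial

theorem det_eval_ne_zero_of_linearIndependent {R ι : Type*} [Field R] [Fintype ι]
    [DecidableEq ι] {g : ι → R[X]} (hg : LinearIndependent R g)
    (hdeg : ∀ i, (g i).degree < Fintype.card ι) {x : ι → R} (hx : Function.Injective x) :
    (Matrix.of fun i j => (g i).eval (x j)).det ≠ 0 := by
  intro hdet
  obtain ⟨c, hc0, hc⟩ := Matrix.exists_vecMul_eq_zero_iff.2 hdet
  refine hc0 (funext <| Fintype.linearIndependent_iff.1 hg c ?_)
  refine eq_zero_of_degree_lt_of_eval_index_eq_zero univ hx.injOn ?_ fun j _ => ?_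
  · rw [card_univ, ← mem_degreeLT]
    exact Submodule.sum_mem _ fun i _ => Submodule.smul_mem _ _ (mem_degreeLT.2 (hdeg i))
  · simpa [eval_finsetSum, Matrix.vecMul, dotProduct] using congrFun hc j

open Lagrange

/-- `fRat s k b i` times `∏ (t - bᵣ)²`, the common denominator of the system. -/
noncomputable def fRatNumerator (s k : ℕ) (b : Fin k → ℝ) (i : Fin (s + 2 * k)) : ℝ[X] :=
  if hi : i.val < s then X ^ i.val * nodal univ b ^ 2
  else
    let q : Fin k := ⟨(i.val - s) / 2, by have := i.isLt; omega⟩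
    if (i.val - s) % 2 = 0 then (X - C (b q)) * nodal (univ.erase q) b ^ 2
    else nodal (univ.erase q) b ^ 2

namespace fRat

variable {s k : ℕ} {b : Fin k → ℝ} {i : Fin (s + 2 * k)} {q : Fin k}

theorem index_cases (i : Fin (s + 2 * k)) :
    i.val < s ∨ ∃ q : Fin k, i.val = s + 2 * q.val ∨ i.val = s + 2 * q.val + 1 := by
  by_cases hi : i.val < s
  · exact Or.inl hi
  · exact Or.inr ⟨⟨(i.val - s) / 2, by have := i.isLt; omega⟩, by simp only; omega⟩

theorem eq_of_lt (hi : i.val < s) : fRat s k b i = fun t => t ^ i.val := by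
  ext t; rw [fRat, dif_pos hi]

theorem eq_of_simplePole (hi : i.val = s + 2 * q.val) :
    fRat s k b i = fun t => (t - b q)⁻¹ := by
  ext t
  rw [fRat, dif_neg (by omega)]
  dsimp only
  rw [show (⟨(i.val - s) / 2, by omega⟩ : Fin k) = q from Fin.ext (by simp only; omega),
    if_pos (by omega)]

theorem eq_of_doublePole (hi : i.val = s + 2 * q.val + 1) :
    fRat s k b i = fun t => ((t - b q) ^ 2)⁻¹ := by
  ext t
  rw [fRat, dif_neg (by omega)]
  dsimp only
  rw [show (⟨(i.val - s) / 2, by omega⟩ : Fin k) = q from Fin.ext (by simp only; omega),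
    if_neg (by omega)]

theorem numerator_eq_of_lt (hi : i.val < s) :
    fRatNumerator s k b i = X ^ i.val * nodal univ b ^ 2 := by
  rw [fRatNumerator, dif_pos hi]

theorem numerator_eq_of_simplePole (hi : i.val = s + 2 * q.val) :
    fRatNumerator s k b i = (X - C (b q)) * nodal (univ.erase q) b ^ 2 := by
  rw [fRatNumerator, dif_neg (by omega)]
  dsimp only
  rw [show (⟨(i.val - s) / 2, by omega⟩ : Fin k) = q from Fin.ext (by simp only; omega),
    if_pos (by omega)]

theorem numerator_eq_of_doublePole (hi : i.val = s + 2 * q.val + 1) :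
    fRatNumerator s k b i = nodal (univ.erase q) b ^ 2 := by
  rw [fRatNumerator, dif_neg (by omega)]
  dsimp only
  rw [show (⟨(i.val - s) / 2, by omega⟩ : Fin k) = q from Fin.ext (by simp only; omega),
    if_neg (by omega)]

theorem eval_numerator {t : ℝ} (ht : ∀ r, t ≠ b r) (i : Fin (s + 2 * k)) :
    (fRatNumerator s k b i).eval t = fRat s k b i t * (nodal univ b).eval t ^ 2 := by
  rcases index_cases i with hi | ⟨q, hi | hi⟩
  · simp [numerator_eq_of_lt hi, eq_of_lt hi]
  · have hne : t - b q ≠ 0 := sub_ne_zero.2 (ht q)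
    rw [numerator_eq_of_simplePole hi, eq_of_simplePole hi, nodal_eq_mul_nodal_erase (mem_univ q)]
    simp only [eval_mul, eval_pow, eval_sub, eval_X, eval_C]
    field_simp
  · have hne : t - b q ≠ 0 := sub_ne_zero.2 (ht q)
    rw [numerator_eq_of_doublePole hi, eq_of_doublePole hi, nodal_eq_mul_nodal_erase (mem_univ q)]
    simp only [eval_mul, eval_pow, eval_sub, eval_X, eval_C]
    field_simp

theorem degree_numerator_lt (i : Fin (s + 2 * k)) :
    (fRatNumerator s k b i).degree < ↑(s + 2 * k) := by
  refine degree_le_natDegree.trans_lt (Nat.cast_lt.2 ?_)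
  have hnodal : ∀ q : Fin k, (nodal (univ.erase q) b ^ 2).natDegree ≤ 2 * (k - 1) := fun q =>
    natDegree_pow_le.trans (by simp [card_erase_of_mem])
  rcases index_cases i with hi | ⟨q, hi | hi⟩
  · rw [numerator_eq_of_lt hi]
    have := natDegree_pow_le (p := nodal univ b) (n := 2)
    have := natDegree_mul_le (p := X ^ i.val) (q := nodal univ b ^ 2)
    simp only [natDegree_nodal, card_univ, Fintype.card_fin, natDegree_X_pow] at *
    omega
  · rw [numerator_eq_of_simplePole hi]
    have := natDegree_mul_le (p := X - C (b q)) (q := nodal (univ.erase q) b ^ 2)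
    rw [natDegree_X_sub_C] at this
    have := hnodal q
    omega
  · rw [numerator_eq_of_doublePole hi]
    have := hnodal q
    omega

theorem sq_X_sub_C_dvd_numerator (hi₁ : i.val ≠ s + 2 * q.val)
    (hi₂ : i.val ≠ s + 2 * q.val + 1) : (X - C (b q)) ^ 2 ∣ fRatNumerator s k b i := by
  have hdvd : ∀ r ≠ q, (X - C (b q)) ^ 2 ∣ nodal (univ.erase r) b ^ 2 := fun r hr =>
    pow_dvd_pow_of_dvd (X_sub_C_dvd_nodal b (mem_erase.2 ⟨hr.symm, mem_univ q⟩)) 2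
  rcases index_cases i with hi | ⟨r, hi | hi⟩
  · rw [numerator_eq_of_lt hi]
    exact Dvd.dvd.mul_left (pow_dvd_pow_of_dvd (X_sub_C_dvd_nodal b (mem_univ q)) 2) _
  · rw [numerator_eq_of_simplePole hi]
    exact Dvd.dvd.mul_left (hdvd r (by rintro rfl; exact hi₁ hi)) _
  · rw [numerator_eq_of_doublePole hi]
    exact hdvd r (by rintro rfl; exact hi₂ hi)

theorem X_sub_C_dvd_numerator (hi : i.val ≠ s + 2 * q.val + 1) :
    X - C (b q) ∣ fRatNumerator s k b i := by
  by_cases hi₁ : i.val = s + 2 * q.val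
  · rw [numerator_eq_of_simplePole hi₁]
    exact dvd_mul_right _ _
  · exact (dvd_pow_self _ two_ne_zero).trans (sq_X_sub_C_dvd_numerator hi₁ hi)

theorem eval_node_numerator (hi : i.val ≠ s + 2 * q.val + 1) :
    (fRatNumerator s k b i).eval (b q) = 0 :=
  dvd_iff_isRoot.1 (X_sub_C_dvd_numerator hi)

theorem eval_node_derivative_numerator (hi₁ : i.val ≠ s + 2 * q.val)
    (hi₂ : i.val ≠ s + 2 * q.val + 1) : (derivative (fRatNumerator s k b i)).eval (b q) = 0 := by
  have hdvd := pow_sub_one_dvd_derivative_of_pow_dvd (sq_X_sub_C_dvd_numerator (b := b) hi₁ hi₂)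
  rw [pow_one] at hdvd
  exact dvd_iff_isRoot.1 hdvd

theorem eval_node_nodal_erase_ne_zero (hb : Function.Injective b) (q : Fin k) :
    (nodal (univ.erase q) b).eval (b q) ≠ 0 :=
  eval_nodal_not_at_node fun _ hr h => (mem_erase.1 hr).1 (hb h).symm

section LinearIndependent

variable {c : Fin (s + 2 * k) → ℝ} (hb : Function.Injective b)
  (hc : ∑ i, c i • fRatNumerator s k b i = 0)
include hb hc

theorem coeff_eq_zero_of_doublePole (hi : i.val = s + 2 * q.val + 1) : c i = 0 := by
  have h := congrArg (eval (b q)) hc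
  rw [eval_finsetSum, eval_zero, sum_eq_single i] at h
  · rwa [eval_smul, numerator_eq_of_doublePole hi, eval_pow, smul_eq_mul, mul_eq_zero,
      or_iff_left (pow_ne_zero 2 (eval_node_nodal_erase_ne_zero hb q))] at h
  · intro j _ hj
    rw [eval_smul, eval_node_numerator fun h => hj (Fin.ext (h.trans hi.symm)), smul_zero]
  · simp

theorem coeff_eq_zero_of_simplePole (hi : i.val = s + 2 * q.val) : c i = 0 := by
  have h := congrArg (fun p => (derivative p).eval (b q)) hc
  simp only [derivative_sum, derivative_smul, eval_finsetSum, eval_smul, derivative_zero,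
    eval_zero] at h
  rw [sum_eq_single i] at h
  · rw [numerator_eq_of_simplePole hi] at h
    simpa [derivative_mul, eval_node_nodal_erase_ne_zero hb q] using h
  · intro j _ hj
    by_cases hj₂ : j.val = s + 2 * q.val + 1
    · rw [coeff_eq_zero_of_doublePole hb hc hj₂, zero_smul]
    · rw [eval_node_derivative_numerator (fun h => hj (Fin.ext (h.trans hi.symm))) hj₂,
        smul_zero]
  · simp

theorem coeff_eq_zero (i : Fin (s + 2 * k)) : c i = 0 := by
  have hpoly : (∑ j, C (c j) * X ^ j.val) * nodal univ b ^ 2 = 0 := by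
    rw [← hc, sum_mul]
    refine sum_congr rfl fun j _ => ?_
    rcases index_cases j with hj | ⟨q, hj | hj⟩
    · rw [numerator_eq_of_lt hj, smul_eq_C_mul, mul_assoc]
    · simp [coeff_eq_zero_of_simplePole hb hc hj]
    · simp [coeff_eq_zero_of_doublePole hb hc hj]
  have h := congrArg (coeff · i.val)
    ((mul_eq_zero.1 hpoly).resolve_right (pow_ne_zero 2 nodal_ne_zero))
  simpa [finsetSum_coeff, coeff_C_mul_X_pow, Fin.val_inj] using h

end LinearIndependent

theorem linearIndependent_numerator (hb : Function.Injective b) :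
    LinearIndependent ℝ (fRatNumerator s k b) :=
  Fintype.linearIndependent_iff.2 fun _ hc => coeff_eq_zero hb hc

theorem det_ne_zero (hb : Function.Injective b) {x : Fin (s + 2 * k) → ℝ}
    (hx : Function.Injective x) (hxb : ∀ j r, x j ≠ b r) :
    (Matrix.of fun i j => fRat s k b i (x j)).det ≠ 0 := by
  have h := det_eval_ne_zero_of_linearIndependent (linearIndependent_numerator hb)
    (by simpa using degree_numerator_lt) hx
  have hM : (Matrix.of fun i j => (fRatNumerator s k b i).eval (x j)) =
      Matrix.of fun i j => (nodal univ b).eval (x j) ^ 2 *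
        (Matrix.of fun i j => fRat s k b i (x j)) i j := by
    ext i j
    rw [of_apply, of_apply, of_apply, eval_numerator (hxb j), mul_comm]
  rw [hM, det_mul_row] at h
  exact right_ne_zero_of_mul h

theorem continuousOn {I : Set ℝ} (hbI : ∀ r, b r ∉ I) (i : Fin (s + 2 * k)) :
    ContinuousOn (fRat s k b i) I := by
  have hne : ∀ r, ∀ t ∈ I, t - b r ≠ 0 := fun r t ht => sub_ne_zero.2 fun h => hbI r (h ▸ ht)
  rcases index_cases i with hi | ⟨q, hi | hi⟩
  · rw [eq_of_lt hi]
    fun_prop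
  · rw [eq_of_simplePole hi]
    exact (continuousOn_id.sub continuousOn_const).inv₀ (hne q)
  · rw [eq_of_doublePole hi]
    exact ((continuousOn_id.sub continuousOn_const).pow 2).inv₀ fun t ht =>
      pow_ne_zero 2 (hne q t ht)

end fRat

theorem stmt9_general (s k : ℕ) (I : Set ℝ) (hI : I.OrdConnected)
    (b : Fin k → ℝ) (hbI : ∀ i, b i ∉ I) (hb : Function.Injective b) :
    IsChebyshevSystem (fRat s k b) I :=
  IsChebyshevSystem.of_det_ne_zero hI (fRat.continuousOn hbI) fun _ hx hxI =>
    fRat.det_ne_zero hb hx.injective fun j r h => hbI r (h ▸ hxI j)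

/-- for `b ∈ ℬ` the rational system is a Chebyshev system on any
bounded interval or any interval contained in `[0,∞)`. -/
theorem stmt9 (s k : ℕ) (hk : 1 ≤ k) (I : Set ℝ) (hI : I.OrdConnected)
    (hIb : Bornology.IsBounded I ∨ I ⊆ Set.Ici 0)
    (b : Fin k → ℝ) (hbI : ∀ i, b i ∉ I) (hb : Function.Injective b) :
    IsChebyshevSystem (fRat s k b) I :=
  stmt9_general s k I hI b hbI hb
end

section
/- Let I ⊆ ℝ be a bounded interval or an interval contained in [0,∞), let s ≥ 0, k ≥ 1, m = s+2k, and let x ∈ ℝ with x ∉ I. Then the m functions t ↦ t^{i−1} (i = 1,…,s) together with t ↦ 1/(t−x)^i (i = 1,…,2k) form a Chebyshev system on I: there is ε ∈ {−1,1} such that ε·det of the m×m matrix of values at any points t_1 < ⋯ < t_m in I is strictly positive. -/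
open Matrix Finset Polynomial

/-- The limiting system: `t^{i−1}` for `i = 1,…,s` followed by `1/(t−x)^i` for
`i = 1,…,2k`. -/
noncomputable def fLim (s k : ℕ) (x : ℝ) (i : Fin (s + 2 * k)) (t : ℝ) : ℝ :=
  if i.val < s then t ^ i.val else ((t - x) ^ (i.val - s + 1))⁻¹

section aux
variable (s k : ℕ) (x : ℝ)

/-- numerator polynomials -/
noncomputable def Paux (i : Fin (s + 2 * k)) : ℝ[X] :=
  if i.val < s then X ^ i.val * (X - C x) ^ (2 * k) else (X - C x) ^ (2 * k - (i.val - s + 1))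

lemma Paux_monic (i : Fin (s + 2 * k)) : (Paux s k x i).Monic := by
  unfold Paux
  split
  · exact (monic_X_pow _).mul ((monic_X_sub_C x).pow _)
  · exact (monic_X_sub_C x).pow _

/-- the degree permutation -/
def degFun (i : Fin (s + 2 * k)) : Fin (s + 2 * k) :=
  if h : i.val < s then ⟨i.val + 2 * k, by omega⟩
  else ⟨s + 2 * k - 1 - i.val, by have := i.isLt; omega⟩

lemma degFun_injective (hk : 1 ≤ k) : Function.Injective (degFun s k) := by
  intro i j h
  unfold degFun at h
  have hi := i.isLt; have hj := j.isLt
  split at h <;> split at h <;>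
    (simp only [Fin.mk.injEq] at h; exact Fin.ext (by omega))

lemma Paux_natDegree (i : Fin (s + 2 * k)) :
    (Paux s k x i).natDegree = (degFun s k i).val := by
  unfold Paux degFun
  by_cases h : i.val < s
  · rw [if_pos h, dif_pos h, ((monic_X_pow _)).natDegree_mul ((monic_X_sub_C x).pow _)]
    simp
  · rw [if_neg h, dif_neg h]
    simp only [natDegree_pow, natDegree_X_sub_C, mul_one]
    have := i.isLt; omega

end aux

/-- for `x ∉ I` the functions `1, t, …, t^{s−1}, 1/(t−x), …,
1/(t−x)^{2k}` form a Chebyshev system on a bounded interval or an interval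
contained in `[0,∞)`. -/
theorem stmt10 (s k : ℕ) (hk : 1 ≤ k) (I : Set ℝ) (hI : I.OrdConnected)
    (hIb : Bornology.IsBounded I ∨ I ⊆ Set.Ici 0)
    (x : ℝ) (hx : x ∉ I) :
    IsChebyshevSystem (fLim s k x) I := by
  classical
  set m := s + 2 * k with hm
  have hbij : Function.Bijective (degFun s k) :=
    (Finite.injective_iff_bijective).1 (degFun_injective s k hk)
  let σ : Equiv.Perm (Fin m) := Equiv.ofBijective _ hbij
  refine ⟨((Equiv.Perm.sign σ.symm : ℤ) : ℝ), ?_, ?_⟩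
  · rcases Int.units_eq_one_or (Equiv.Perm.sign σ.symm) with h | h <;> rw [h] <;> simp
  intro t ht htI
  -- the coefficient matrix
  set A : Matrix (Fin m) (Fin m) ℝ := Matrix.of fun i l => (Paux s k x i).coeff l.val with hA
  -- A is lower triangular after the row permutation σ.symm
  have hAdet : ((Equiv.Perm.sign σ.symm : ℤ) : ℝ) * A.det = 1 := by
    have htri : (A.submatrix σ.symm id).det = ∏ i, (A.submatrix σ.symm id) i i := by
      apply Matrix.det_of_lowerTriangular
      intro i j hij
      simp only [Matrix.submatrix_apply, id, hA, Matrix.of_apply]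
      apply Polynomial.coeff_eq_zero_of_natDegree_lt
      rw [Paux_natDegree]
      have h2 : degFun s k (σ.symm i) = i := σ.apply_symm_apply i
      rw [h2]
      exact (show i < j from hij)
    have hdiag : ∀ i : Fin m, (A.submatrix σ.symm id) i i = 1 := by
      intro i
      simp only [Matrix.submatrix_apply, id, hA, Matrix.of_apply]
      have h2 : degFun s k (σ.symm i) = i := σ.apply_symm_apply i
      have := Paux_natDegree s k x (σ.symm i)
      rw [h2] at this
      rw [← this]
      exact (Paux_monic s k x (σ.symm i)).coeff_natDegree
    rw [Matrix.det_permute σ.symm A] at htri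
    rw [Finset.prod_congr rfl (fun i _ => hdiag i), Finset.prod_const_one] at htri
    exact_mod_cast htri
  -- each t j ≠ x
  have htx : ∀ j : Fin m, t j - x ≠ 0 := by
    intro j
    intro h
    apply hx
    have : x = t j := by linarith [sub_eq_zero.mp h]
    rw [this]; exact htI j
  have hpow : ∀ j : Fin m, (t j - x) ^ (2 * k) ≠ 0 := fun j => pow_ne_zero _ (htx j)
  -- the scaled Vandermonde matrix
  set N : Matrix (Fin m) (Fin m) ℝ :=
    Matrix.of fun l j => ((t j - x) ^ (2 * k))⁻¹ * (t j) ^ l.val with hN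
  -- main factorization
  have hfact : (Matrix.of fun i j => fLim s k x i (t j)) = A * N := by
    ext i j
    simp only [Matrix.mul_apply, hA, hN, Matrix.of_apply]
    have hdeg : (Paux s k x i).natDegree < m := by
      rw [Paux_natDegree]; exact (degFun s k i).isLt
    have heval : ∑ l : Fin m, (Paux s k x i).coeff l.val * (((t j - x) ^ (2*k))⁻¹ * (t j) ^ l.val)
        = (Paux s k x i).eval (t j) * ((t j - x) ^ (2*k))⁻¹ := by
      rw [Polynomial.eval_eq_sum_range' hdeg, Finset.sum_mul,
        ← Fin.sum_univ_eq_sum_range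
          (fun l => (Paux s k x i).coeff l * (t j) ^ l * ((t j - x) ^ (2*k))⁻¹) m]
      apply Finset.sum_congr rfl
      intro l _
      ring
    rw [heval]
    unfold fLim Paux
    split
    · next h =>
      simp only [eval_mul, eval_pow, eval_X, eval_sub, eval_C]
      rw [mul_assoc, mul_inv_cancel₀ (hpow j), mul_one]
    · next h =>
      simp only [eval_pow, eval_sub, eval_X, eval_C]
      have hsplit : (t j - x) ^ (2 * k)
          = (t j - x) ^ (2 * k - (i.val - s + 1)) * (t j - x) ^ (i.val - s + 1) := by
        rw [← pow_add]; congr 1; have := i.isLt; omega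
      rw [hsplit, mul_inv, ← mul_assoc,
        mul_inv_cancel₀ (pow_ne_zero _ (htx j)), one_mul]
  rw [hfact, Matrix.det_mul]
  have hNdet : N.det = (∏ j, ((t j - x) ^ (2 * k))⁻¹) * (Matrix.vandermonde t)ᵀ.det := by
    have : N = Matrix.of fun l j => ((t j - x) ^ (2*k))⁻¹ * (Matrix.vandermonde t)ᵀ l j := by
      ext l j; simp [hN, Matrix.vandermonde]
    rw [this, Matrix.det_mul_row]
  rw [hNdet, Matrix.det_transpose, Matrix.det_vandermonde]
  have hvpos : 0 < ∏ i : Fin m, ∏ j ∈ Finset.Ioi i, (t j - t i) := by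
    apply Finset.prod_pos
    intro i _
    apply Finset.prod_pos
    intro j hj
    have : i < j := Finset.mem_Ioi.mp hj
    linarith [ht this]
  have hppos : 0 < ∏ j : Fin m, ((t j - x) ^ (2 * k))⁻¹ := by
    apply Finset.prod_pos
    intro j _
    apply inv_pos.mpr
    exact (even_two_mul k).pow_pos (htx j)
  calc 0 < 1 * ((∏ j, ((t j - x) ^ (2 * k))⁻¹) * ∏ i : Fin m, ∏ j ∈ Finset.Ioi i, (t j - t i)) := by
        positivity
    _ = ((Equiv.Perm.sign σ.symm : ℤ) : ℝ) *
        (A.det * ((∏ j, ((t j - x) ^ (2 * k))⁻¹) * ∏ i : Fin m, ∏ j ∈ Finset.Ioi i, (t j - t i))) := by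
        rw [← hAdet]; ring
end

section
/- Let I ⊆ ℝ be an interval, s ≥ 0, k ≥ 1, m = s+2k, b = (b_1,…,b_k) ∈ ℬ, and assume one of: (a) I ⊆ [0,∞), or (b) s = 0 or s = 1. Then for every j ∈ {1,…,k}, the m−1 functions {f_i(·,b) : i ∈ {1,…,m}, i ≠ s+2j} (the rational system with the function 1/(t−b_j)² removed) form a Chebyshev system on I. -/
/-!
Multiplying the remaining functions by `D(t) = (t - b_j) ∏_{l ≠ j} (t - b_l)²` turns them into
`m - 1` polynomials of degree at most `m - 2`, linearly independent by the uniqueness of partial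
fraction expansions. Their collocation matrix at nodes `x_1 < ⋯ < x_{m-1}` is therefore
(invertible coefficient matrix) × (Vandermonde matrix)ᵀ × `diag (1 / D(x_α))`. The Vandermonde
determinant is positive, and `D` has constant sign on `I` since it is continuous and has no
root in the interval `I`.
-/

open Matrix Finset

/-- Chebyshev system over an arbitrary finite index type. -/
def IsChebyshevSystemIdx {ι : Type} [Fintype ι] [DecidableEq ι]
    (g : ι → ℝ → ℝ) (I : Set ℝ) : Prop :=
  ∃ ε : ℝ, (ε = 1 ∨ ε = -1) ∧
    ∀ x : Fin (Fintype.card ι) → ℝ, StrictMono x → (∀ j, x j ∈ I) →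
      0 < ε * (Matrix.of fun i j => g ((Fintype.equivFin ι).symm i) (x j)).det

open Polynomial

section Chebyshev

variable {ι : Type} [Fintype ι] [DecidableEq ι] {I : Set ℝ}

theorem isChebyshevSystemIdx_of_mul_det_pos {g : ι → ℝ → ℝ} {c : ℝ} (hc : c ≠ 0)
    (h : ∀ x : Fin (Fintype.card ι) → ℝ, StrictMono x → (∀ j, x j ∈ I) →
      0 < c * (Matrix.of fun i j => g ((Fintype.equivFin ι).symm i) (x j)).det) :
    IsChebyshevSystemIdx g I := by
  rcases hc.lt_or_gt with hc | hc
  · refine ⟨-1, Or.inr rfl, fun x hx hxI => ?_⟩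
    nlinarith [h x hx hxI]
  · refine ⟨1, Or.inl rfl, fun x hx hxI => ?_⟩
    nlinarith [h x hx hxI]

theorem IsChebyshevSystemIdx.congr {g g' : ι → ℝ → ℝ} (hg : IsChebyshevSystemIdx g I)
    (h : ∀ i, ∀ t ∈ I, g i t = g' i t) : IsChebyshevSystemIdx g' I := by
  obtain ⟨ε, hε, hpos⟩ := hg
  refine ⟨ε, hε, fun x hx hxI => ?_⟩
  convert hpos x hx hxI using 4
  ext r α
  exact (h _ _ (hxI α)).symm

theorem IsChebyshevSystemIdx.mul_left {g : ι → ℝ → ℝ} (hg : IsChebyshevSystemIdx g I)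
    {w : ℝ → ℝ} (hw : (∀ t ∈ I, 0 < w t) ∨ (∀ t ∈ I, w t < 0)) :
    IsChebyshevSystemIdx (fun i t => w t * g i t) I := by
  obtain ⟨ε, hε, hpos⟩ := hg
  have hε0 : ε ≠ 0 := by rcases hε with rfl | rfl <;> norm_num
  have hdet : ∀ x : Fin (Fintype.card ι) → ℝ,
      (Matrix.of fun i α => w (x α) * g ((Fintype.equivFin ι).symm i) (x α)).det =
        (Matrix.of fun i α => g ((Fintype.equivFin ι).symm i) (x α)).det * ∏ α, w (x α) := by
    intro x
    rw [← Matrix.det_diagonal, ← Matrix.det_mul]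
    congr 1
    ext i α
    simp [Matrix.mul_diagonal, mul_comm]
  rcases hw with hw | hw
  · refine isChebyshevSystemIdx_of_mul_det_pos hε0 fun x hx hxI => ?_
    rw [hdet, ← mul_assoc]
    exact mul_pos (hpos x hx hxI) (Finset.prod_pos fun α _ => hw _ (hxI α))
  · refine isChebyshevSystemIdx_of_mul_det_pos (c := ε * (-1) ^ Fintype.card ι)
      (mul_ne_zero hε0 (by simp)) fun x hx hxI => ?_
    have hprod : 0 < (-1) ^ Fintype.card ι * ∏ α, w (x α) := by
      rw [← Fin.prod_const, ← Finset.prod_mul_distrib]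
      exact Finset.prod_pos fun α _ => by linarith [hw _ (hxI α)]
    rw [hdet]
    nlinarith [mul_pos (hpos x hx hxI) hprod]

theorem det_vandermonde_pos {n : ℕ} {x : Fin n → ℝ} (hx : StrictMono x) :
    0 < (Matrix.vandermonde x).det := by
  rw [Matrix.det_vandermonde]
  exact Finset.prod_pos fun i _ => Finset.prod_pos fun i' hi' =>
    sub_pos.mpr (hx (Finset.mem_Ioi.mp hi'))

theorem isChebyshevSystemIdx_eval_of_linearIndependent {P : ι → ℝ[X]}
    (hP : LinearIndependent ℝ P)
    (hdeg : ∀ i, P i ∈ degreeLT ℝ (Fintype.card ι)) (I : Set ℝ) :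
    IsChebyshevSystemIdx (fun i t => (P i).eval t) I := by
  set e := Fintype.equivFin ι
  set Q : ι → degreeLT ℝ (Fintype.card ι) := fun i => ⟨P i, hdeg i⟩
  set M : Matrix (Fin (Fintype.card ι)) (Fin (Fintype.card ι)) ℝ :=
    Matrix.of fun r => degreeLTEquiv ℝ _ (Q (e.symm r))
  have hM : M.det ≠ 0 := by
    have hQ : LinearIndependent ℝ Q := LinearIndependent.of_comp (degreeLT ℝ _).subtype hP
    have hrows : LinearIndependent ℝ M.row :=
      (hQ.map' _ (degreeLTEquiv ℝ _).ker).comp e.symm e.symm.injective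
    exact (Matrix.isUnit_iff_isUnit_det M).mp (Matrix.linearIndependent_rows_iff_isUnit.mp hrows)
      |>.ne_zero
  refine isChebyshevSystemIdx_of_mul_det_pos hM fun x hx _ => ?_
  have hfactor : (Matrix.of fun i α => (P (e.symm i)).eval (x α)) =
      M * (Matrix.vandermonde x).transpose := by
    ext r α
    simp [Matrix.mul_apply, M, Q, eval_eq_sum_degreeLTEquiv (hdeg _), mul_comm]
  rw [hfactor, Matrix.det_mul, Matrix.det_transpose, ← mul_assoc, ← sq]
  exact mul_pos (pow_two_pos_of_ne_zero hM) (det_vandermonde_pos hx)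

end Chebyshev

theorem IsPreconnected.forall_pos_or_forall_neg {s : Set ℝ} (hs : IsPreconnected s)
    {f : ℝ → ℝ} (hf : ContinuousOn f s) (h0 : ∀ t ∈ s, f t ≠ 0) :
    (∀ t ∈ s, 0 < f t) ∨ (∀ t ∈ s, f t < 0) := by
  by_contra! h
  obtain ⟨⟨a, ha, hfa⟩, ⟨c, hc, hfc⟩⟩ := h
  obtain ⟨t, ht, hft⟩ := hs.intermediate_value ha hc hf ⟨hfa, hfc⟩
  exact h0 t ht hft

theorem eq_zero_of_sum_smul_eq_zero_of_dvd {K R ι : Type*} [Field K] [CommRing R] [Algebra K R]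
    [Fintype ι] {c : ι → K} {v : ι → R} (h : ∑ i, c i • v i = 0) {q : R} (i : ι)
    (hdvd : ∀ i' ≠ i, c i' ≠ 0 → q ∣ v i') (hndvd : ¬ q ∣ v i) : c i = 0 := by
  classical
  by_contra hci
  have hrest : q ∣ ∑ i' ∈ Finset.univ.erase i, c i' • v i' := by
    refine Finset.dvd_sum fun i' hi' => ?_
    by_cases hci' : c i' = 0
    · simp [hci']
    · rw [Algebra.smul_def]
      exact dvd_mul_of_dvd_right (hdvd i' (Finset.ne_of_mem_erase hi') hci') _
  have hi : c i • v i = -∑ i' ∈ Finset.univ.erase i, c i' • v i' := by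
    rw [eq_neg_iff_add_eq_zero,
      Finset.add_sum_erase _ (fun i' => c i' • v i') (Finset.mem_univ i), h]
  apply hndvd
  rw [← inv_smul_smul₀ hci (v i), hi, Algebra.smul_def]
  exact dvd_mul_of_dvd_right hrest.neg_right _

namespace RationalSystem

variable {s k : ℕ}

def poleOrder (s : ℕ) (i : Fin (s + 2 * k)) (l : Fin k) : ℕ :=
  if s ≤ i.val ∧ (i.val - s) / 2 = l.val then (i.val - s) % 2 + 1 else 0

def monomialDegree (s : ℕ) (i : Fin (s + 2 * k)) : ℕ :=
  if i.val < s then i.val else 0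

def removedIndex (s : ℕ) (j : Fin k) : Fin (s + 2 * k) :=
  ⟨s + 2 * j.val + 1, by omega⟩

def denomMult (j l : Fin k) : ℕ :=
  if l = j then 1 else 2

noncomputable def denom (b : Fin k → ℝ) (j : Fin k) : ℝ[X] :=
  ∏ l, (X - C (b l)) ^ denomMult j l

-- `denom b j` is the `D` of the proof idea, and `numer s b j i = D * fRat s k b i`.
noncomputable def numer (s : ℕ) (b : Fin k → ℝ) (j : Fin k) (i : Fin (s + 2 * k)) : ℝ[X] :=
  X ^ monomialDegree s i * ∏ l, (X - C (b l)) ^ (denomMult j l - poleOrder s i l)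

theorem poleOrder_of_lt {i : Fin (s + 2 * k)} (hi : i.val < s) (l : Fin k) :
    poleOrder s i l = 0 := by
  simp [poleOrder, hi.not_ge]

theorem monomialDegree_of_poleOrder_pos {i : Fin (s + 2 * k)} {l : Fin k}
    (h : 0 < poleOrder s i l) : monomialDegree s i = 0 := by
  simp only [poleOrder, monomialDegree] at h ⊢
  split_ifs at h ⊢ <;> omega

theorem exists_poleOrder_pos {i : Fin (s + 2 * k)} (hi : s ≤ i.val) :
    ∃ l, 0 < poleOrder s i l :=
  ⟨⟨(i.val - s) / 2, by omega⟩, by simp [poleOrder, hi]⟩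

theorem poleOrder_injective {i i' : Fin (s + 2 * k)} {l : Fin k} (hpos : 0 < poleOrder s i l)
    (h : poleOrder s i l = poleOrder s i' l) : i = i' := by
  simp only [poleOrder] at hpos h
  ext
  split_ifs at hpos h <;> omega

theorem poleOrder_le_denomMult {i : Fin (s + 2 * k)} {j : Fin k}
    (hi : i ≠ removedIndex s j) (l : Fin k) : poleOrder s i l ≤ denomMult j l := by
  simp only [removedIndex, ne_eq, Fin.ext_iff] at hi
  simp only [poleOrder, denomMult, Fin.ext_iff]
  split_ifs <;> omega

theorem prod_pow_poleOrder {M : Type*} [CommMonoid M] (f : Fin k → M) {i : Fin (s + 2 * k)}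
    (hi : s ≤ i.val) :
    ∏ l, f l ^ poleOrder s i l = f ⟨(i.val - s) / 2, by omega⟩ ^ ((i.val - s) % 2 + 1) := by
  rw [Finset.prod_eq_single_of_mem (⟨(i.val - s) / 2, by omega⟩ : Fin k) (Finset.mem_univ _)]
  · simp [poleOrder, hi]
  · intro l _ hl
    have : (i.val - s) / 2 ≠ l.val := fun h => hl (Fin.ext h.symm)
    simp [poleOrder, this]

-- This holds at the poles too, where both sides are `0` since `0⁻¹ = 0`.
theorem fRat_eq_mul_inv_prod (b : Fin k → ℝ) (i : Fin (s + 2 * k)) (t : ℝ) :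
    fRat s k b i t = t ^ monomialDegree s i * (∏ l, (t - b l) ^ poleOrder s i l)⁻¹ := by
  unfold fRat monomialDegree
  split_ifs with hi hpar
  · simp [poleOrder_of_lt hi]
  · rw [prod_pow_poleOrder _ (not_lt.mp hi), hpar]
    simp
  · rw [prod_pow_poleOrder _ (not_lt.mp hi), Nat.mod_two_ne_zero.mp hpar]
    simp

theorem denom_ne_zero (b : Fin k → ℝ) (j : Fin k) : denom b j ≠ 0 :=
  Finset.prod_ne_zero_iff.mpr fun _ _ => pow_ne_zero _ (X_sub_C_ne_zero _)

theorem eval_denom_ne_zero (b : Fin k → ℝ) (j : Fin k) {t : ℝ} (ht : ∀ l, t ≠ b l) :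
    (denom b j).eval t ≠ 0 := by
  simp only [denom, eval_prod, eval_pow, eval_sub, eval_X, eval_C]
  exact Finset.prod_ne_zero_iff.mpr fun l _ => pow_ne_zero _ (sub_ne_zero.mpr (ht l))

theorem numer_of_lt (b : Fin k → ℝ) (j : Fin k) {i : Fin (s + 2 * k)} (hi : i.val < s) :
    numer s b j i = X ^ monomialDegree s i * denom b j := by
  simp [numer, denom, poleOrder_of_lt hi]

theorem fRat_eq_inv_mul_eval (b : Fin k → ℝ) {j : Fin k} {i : Fin (s + 2 * k)}
    (hi : i ≠ removedIndex s j) {t : ℝ} (ht : ∀ l, t ≠ b l) :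
    fRat s k b i t = ((denom b j).eval t)⁻¹ * (numer s b j i).eval t := by
  have hsplit : ∏ l, (t - b l) ^ denomMult j l =
      (∏ l, (t - b l) ^ (denomMult j l - poleOrder s i l)) *
        ∏ l, (t - b l) ^ poleOrder s i l := by
    rw [← Finset.prod_mul_distrib]
    exact Finset.prod_congr rfl fun l _ => by
      rw [← pow_add, Nat.sub_add_cancel (poleOrder_le_denomMult hi l)]
  have hne : ∀ n : Fin k → ℕ, ∏ l, (t - b l) ^ n l ≠ 0 := fun n =>
    Finset.prod_ne_zero_iff.mpr fun l _ => pow_ne_zero _ (sub_ne_zero.mpr (ht l))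
  simp only [fRat_eq_mul_inv_prod, denom, numer, eval_prod, eval_mul, eval_pow, eval_sub, eval_X,
    eval_C, hsplit]
  field_simp [hne]

theorem sum_denomMult (j : Fin k) : ∑ l, denomMult j l = 2 * k - 1 := by
  have hrest : ∀ l ∈ Finset.univ.erase j, denomMult j l = 2 := fun l hl =>
    if_neg (Finset.ne_of_mem_erase hl)
  rw [← Finset.add_sum_erase _ _ (Finset.mem_univ j), Finset.sum_congr rfl hrest]
  simp [denomMult, Finset.card_erase_of_mem]
  have := j.pos
  omega

theorem natDegree_numer (b : Fin k → ℝ) (j : Fin k) (i : Fin (s + 2 * k)) :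
    (numer s b j i).natDegree =
      monomialDegree s i + ∑ l, (denomMult j l - poleOrder s i l) := by
  have hmonic : ∀ l ∈ Finset.univ, ((X - C (b l)) ^ (denomMult j l - poleOrder s i l)).Monic :=
    fun _ _ => (monic_X_sub_C _).pow _
  rw [numer, (monic_X_pow _).natDegree_mul (monic_prod_of_monic _ _ hmonic), natDegree_X_pow,
    natDegree_prod_of_monic _ _ hmonic]
  simp

theorem numer_mem_degreeLT (b : Fin k → ℝ) (j : Fin k) (i : Fin (s + 2 * k)) :
    numer s b j i ∈ degreeLT ℝ (s + 2 * k - 1) := by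
  rw [mem_degreeLT]
  refine degree_le_natDegree.trans_lt ?_
  suffices (numer s b j i).natDegree < s + 2 * k - 1 by exact_mod_cast this
  rw [natDegree_numer]
  have hsum := sum_denomMult j
  have hk := j.pos
  by_cases his : i.val < s
  · simp only [monomialDegree, his, if_true, poleOrder_of_lt his, Nat.sub_zero]
    omega
  · obtain ⟨l, hl⟩ := exists_poleOrder_pos (not_lt.mp his)
    have hlt : ∑ l, (denomMult j l - poleOrder s i l) < ∑ l, denomMult j l :=
      Finset.sum_lt_sum (fun _ _ => Nat.sub_le _ _)
        ⟨l, Finset.mem_univ _, Nat.sub_lt (by unfold denomMult; split_ifs <;> omega) hl⟩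
    rw [monomialDegree_of_poleOrder_pos hl]
    omega

theorem X_sub_C_pow_dvd_numer (b : Fin k → ℝ) (j : Fin k) (i : Fin (s + 2 * k)) (l : Fin k) :
    (X - C (b l)) ^ (denomMult j l - poleOrder s i l) ∣ numer s b j i :=
  dvd_mul_of_dvd_right (Finset.dvd_prod_of_mem _ (Finset.mem_univ l)) _

theorem not_X_sub_C_pow_succ_dvd_numer {b : Fin k → ℝ} (hb : Function.Injective b) (j : Fin k)
    {i : Fin (s + 2 * k)} {l : Fin k} (hpos : 0 < poleOrder s i l) :
    ¬ (X - C (b l)) ^ (denomMult j l - poleOrder s i l + 1) ∣ numer s b j i := by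
  rw [numer, monomialDegree_of_poleOrder_pos hpos, pow_zero, one_mul,
    ← Finset.mul_prod_erase _ _ (Finset.mem_univ l), pow_succ,
    mul_dvd_mul_iff_left (pow_ne_zero _ (X_sub_C_ne_zero _)), dvd_iff_isRoot, IsRoot.def,
    eval_prod]
  refine Finset.prod_ne_zero_iff.mpr fun l' hl' => ?_
  simp [sub_eq_zero, hb.ne (Finset.ne_of_mem_erase hl').symm]

theorem pole_coeff_eq_zero_of_sum_smul_numer_eq_zero {b : Fin k → ℝ}
    (hb : Function.Injective b) {j : Fin k} {c : {i // i ≠ removedIndex s j} → ℝ}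
    (hc : ∑ p, c p • numer s b j p.val = 0)
    {p : {i // i ≠ removedIndex s j}} (hp : s ≤ p.val.val) : c p = 0 := by
  -- Induction on the order `n` to which the numerator vanishes at the pole: among the terms
  -- not yet known to vanish, only the one of order exactly `n` is not divisible by
  -- `(X - b l) ^ (n + 1)`.
  have hpole : ∀ n p l, 0 < poleOrder s p.val l →
      denomMult j l - poleOrder s p.val l < n → c p = 0 := by
    intro n
    induction n with
    | zero => intro _ _ _ h; omega
    | succ n ih =>
      intro p l hpos hlt
      by_cases hlt' : denomMult j l - poleOrder s p.val l < n
      · exact ih p l hpos hlt'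
      refine eq_zero_of_sum_smul_eq_zero_of_dvd hc p (q := (X - C (b l)) ^ (n + 1))
        (fun p' hp' hcp' => ?_) ?_
      · refine (pow_dvd_pow _ ?_).trans (X_sub_C_pow_dvd_numer b j p'.val l)
        have hle := poleOrder_le_denomMult p.prop l
        have hle' := poleOrder_le_denomMult p'.prop l
        rcases Nat.eq_zero_or_pos (poleOrder s p'.val l) with h0 | hpos'
        · omega
        · have hne : poleOrder s p'.val l ≠ poleOrder s p.val l := fun h =>
            hp' (Subtype.ext (poleOrder_injective hpos' h))
          have := mt (ih p' l hpos') hcp'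
          omega
      · have hn : denomMult j l - poleOrder s p.val l = n := by omega
        exact hn ▸ not_X_sub_C_pow_succ_dvd_numer hb j hpos
  obtain ⟨l, hl⟩ := exists_poleOrder_pos hp
  exact hpole _ p l hl (Nat.lt_succ_self _)

theorem linearIndependent_numer {b : Fin k → ℝ} (hb : Function.Injective b) (j : Fin k) :
    LinearIndependent ℝ (fun p : {i // i ≠ removedIndex s j} => numer s b j p.val) := by
  rw [Fintype.linearIndependent_iff]
  intro c hc
  have hpole := fun p => pole_coeff_eq_zero_of_sum_smul_numer_eq_zero hb hc (p := p)
  have hmono : ∑ p, c p • (X : ℝ[X]) ^ monomialDegree s p.val = 0 := by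
    refine (mul_eq_zero.mp ?_).resolve_right (denom_ne_zero b j)
    rw [Finset.sum_mul, ← hc]
    refine Finset.sum_congr rfl fun p _ => ?_
    by_cases hp : s ≤ p.val.val
    · simp [hpole p hp]
    · rw [smul_mul_assoc, numer_of_lt b j (not_le.mp hp)]
  intro p
  by_cases hp : s ≤ p.val.val
  · exact hpole p hp
  have := congrArg (coeff · p.val.val) hmono
  simp only [finsetSum_coeff, coeff_smul, coeff_X_pow, smul_eq_mul, mul_ite, mul_one, mul_zero,
    coeff_zero] at this
  rwa [Finset.sum_eq_single p (fun p' _ hp' => ?_) (by simp), monomialDegree,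
    if_pos (not_le.mp hp), if_pos rfl] at this
  by_cases hsp' : s ≤ p'.val.val
  · simp [hpole p' hsp']
  · rw [monomialDegree, if_pos (not_le.mp hsp'),
      if_neg fun h => hp' (Subtype.ext (Fin.ext h.symm))]

end RationalSystem

/-- under (a) `I ⊆ [0,∞)` or (b) `s = 0` or `s = 1`, the rational
system with the function `1/(t−b_j)²` removed is a Chebyshev system on `I`. -/
theorem stmt11 (s k : ℕ) (I : Set ℝ) (hI : I.OrdConnected)
    (b : Fin k → ℝ) (hbI : ∀ i, b i ∉ I) (hb : Function.Injective b)
    (j : Fin k) :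
    IsChebyshevSystemIdx
      (fun p : {i : Fin (s + 2 * k) //
          i ≠ (⟨s + 2 * j.val + 1, by have := j.isLt; omega⟩ : Fin (s + 2 * k))} =>
        fRat s k b p.val) I := by
  have hnotMem : ∀ t ∈ I, ∀ l, t ≠ b l := fun t ht l h => hbI l (h ▸ ht)
  have hcard : Fintype.card {i // i ≠ RationalSystem.removedIndex s j} = s + 2 * k - 1 := by
    simp [Fintype.card_subtype_compl]
  have hpoly := isChebyshevSystemIdx_eval_of_linearIndependent
    (RationalSystem.linearIndependent_numer hb j)
    (fun p => hcard ▸ RationalSystem.numer_mem_degreeLT b j p.val) I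
  set D := RationalSystem.denom b j
  have hsign : (∀ t ∈ I, 0 < (D.eval t)⁻¹) ∨ (∀ t ∈ I, (D.eval t)⁻¹ < 0) := by
    simpa only [inv_pos, inv_lt_zero] using
      hI.isPreconnected.forall_pos_or_forall_neg D.continuous.continuousOn
        fun t ht => RationalSystem.eval_denom_ne_zero b j (hnotMem t ht)
  exact (hpoly.mul_left hsign).congr fun p t ht =>
    (RationalSystem.fRat_eq_inv_mul_eval b p.prop (hnotMem t ht)).symm
end

section
/- Let I ⊆ ℝ be a bounded interval or an interval contained in [0,∞), let s ≥ 0, k ≥ 2, m = s+2k, and let j ∈ {1,…,k}. Then there exists b ∈ ℬ such that the m−1 functions {f_i(·,b) : i ∈ {1,…,m}, i ≠ s+2j−1} (the rational system with the function 1/(t−b_j) removed) do NOT form a Chebyshev system on I; that is, there exist points t_1 < ⋯ < t_{m−1} and t'_1 < ⋯ < t'_{m−1} in I such that the corresponding (m−1)×(m−1) determinants of values are not both of the same strict sign (one is ≤ 0 while the other is ≥ 0, not both zero, or one vanishes). -/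
open Matrix Finset

/-!
Let `D = ∏ᵢ (t - bᵢ)²` and `Eⱼ = D / (t - bⱼ)²`. By partial fractions, `p / D` lies in the span
of the rational system for every polynomial `p` of degree `< s + 2k`, and its coefficient at
`1/(t - bⱼ)` is `(p / Eⱼ)'(bⱼ)`, which vanishes iff `p` and `Eⱼ` have the same logarithmic
derivative at `bⱼ`. For `p = ∏ₗ (t - xₗ)` with `s + 2k - 1` points `xₗ ∈ I` this reads
`∑ₗ 1/(bⱼ - xₗ) = ∑_{i ≠ j} 2/(bⱼ - bᵢ)`. Under this balance condition `p / D` is a nonzero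
combination of the system without `1/(t - bⱼ)` that vanishes at every `xₗ`, so the corresponding
determinant is `0`. Since `I` is bounded below and `k ≥ 2`, the balance condition can be met with
all poles below `I`: the poles `bᵢ` other than `bⱼ` and one `bᵢ₀` go below `bⱼ`, and `bᵢ₀` is solved
for; it lands between `bⱼ` and `I` once `bⱼ` is far enough below `I`.
-/

open Polynomial

theorem not_isChebyshevSystemIdx_of_sum_eq_zero {ι : Type} [Fintype ι] [DecidableEq ι]
    {g : ι → ℝ → ℝ} {I : Set ℝ} {x : Fin (Fintype.card ι) → ℝ} (hx : StrictMono x)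
    (hxI : ∀ l, x l ∈ I) {c : ι → ℝ} (hc : c ≠ 0) (hcx : ∀ l, ∑ i, c i * g i (x l) = 0) :
    ¬ IsChebyshevSystemIdx g I := by
  rintro ⟨ε, -, hε⟩
  have hdet : (Matrix.of fun i l => g ((Fintype.equivFin ι).symm i) (x l)).det = 0 := by
    refine Matrix.exists_vecMul_eq_zero_iff.mp ⟨c ∘ (Fintype.equivFin ι).symm, ?_, ?_⟩
    · exact fun h => hc (funext fun i => by simpa using congrFun h (Fintype.equivFin ι i))
    · ext l
      simpa [Matrix.vecMul, dotProduct] using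
        (Fintype.equivFin ι).symm.sum_comp (fun i => c i * g i (x l)) ▸ hcx l
  simpa [hdet] using hε x hx hxI

theorem exists_strictMono_fin_Icc {α : Type*} [LinearOrder α] [DenselyOrdered α] {a c : α}
    (hac : a < c) (n : ℕ) : ∃ x : Fin n → α, StrictMono x ∧ ∀ l, x l ∈ Set.Icc a c := by
  obtain ⟨t, ht, htn⟩ := (Set.Icc_infinite hac).exists_subset_card_eq n
  exact ⟨t.orderEmbOfFin htn, (t.orderEmbOfFin htn).strictMono,
    fun l => ht (t.orderEmbOfFin_mem htn l)⟩

theorem eval_eq_zero_and_eval_derivative_eq_zero_of_sq_dvd {R : Type*} [CommRing R] {p : R[X]}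
    {a : R} (h : (X - C a) ^ 2 ∣ p) : p.eval a = 0 ∧ p.derivative.eval a = 0 := by
  obtain ⟨g, rfl⟩ := h
  simp [derivative_mul, derivative_pow]

theorem eval_derivative_prod_X_sub_C_pow {𝕜 ι : Type*} [NontriviallyNormedField 𝕜]
    (u : Finset ι) (y : ι → 𝕜) (n : ℕ) {t : 𝕜} (ht : ∀ i ∈ u, t ≠ y i) :
    (∏ i ∈ u, (X - C (y i)) ^ n).derivative.eval t
      = (∏ i ∈ u, (X - C (y i)) ^ n).eval t * ∑ i ∈ u, n * (t - y i)⁻¹ := by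
  set p := ∏ i ∈ u, (X - C (y i)) ^ n
  have hp : p.eval t ≠ 0 := by
    simp only [p, eval_prod, eval_pow, eval_sub, eval_X, eval_C]
    exact prod_ne_zero_iff.mpr fun i hi => pow_ne_zero _ (sub_ne_zero.mpr (ht i hi))
  have hlog : logDeriv (fun z => p.eval z) t = ∑ i ∈ u, n * (t - y i)⁻¹ := by
    simp only [p, eval_prod, eval_pow, eval_sub, eval_X, eval_C]
    rw [logDeriv_prod (f := fun i z => (z - y i) ^ n)
      (fun i hi => pow_ne_zero _ (sub_ne_zero.mpr (ht i hi))) (by fun_prop)]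
    refine sum_congr rfl fun i _ => ?_
    rw [logDeriv_fun_pow (by fun_prop)]
    simp [logDeriv_apply]
  rw [logDeriv_apply, Polynomial.deriv, div_eq_iff hp] at hlog
  rw [hlog, mul_comm]

theorem sum_fin_C_coeff_mul_X_pow {R : Type*} [Semiring R] {p : R[X]} {n : ℕ}
    (hp : p.degree < n) :
    ∑ a : Fin n, C (p.coeff a) * X ^ (a : ℕ) = p := by
  simp_rw [C_mul_X_pow_eq_monomial]
  rw [p.sum_fin (monomial ·) (by simp) hp, sum_monomial_eq]

section Poles

variable {k : ℕ} (b : Fin k → ℝ)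

noncomputable def poleDenom : ℝ[X] := ∏ i, (X - C (b i)) ^ 2

noncomputable def poleCofactor (i : Fin k) : ℝ[X] := ∏ i' ∈ univ.erase i, (X - C (b i')) ^ 2

theorem poleDenom_eq (i : Fin k) : poleDenom b = (X - C (b i)) ^ 2 * poleCofactor b i :=
  (mul_prod_erase _ _ (mem_univ i)).symm

theorem sq_dvd_poleCofactor {i i' : Fin k} (h : i ≠ i') :
    (X - C (b i)) ^ 2 ∣ poleCofactor b i' :=
  dvd_prod_of_mem _ (mem_erase.mpr ⟨h, mem_univ i⟩)

theorem monic_poleDenom : (poleDenom b).Monic :=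
  monic_prod_of_monic _ _ fun _ _ => (monic_X_sub_C _).pow 2

theorem monic_poleCofactor (i : Fin k) : (poleCofactor b i).Monic :=
  monic_prod_of_monic _ _ fun _ _ => (monic_X_sub_C _).pow 2

theorem natDegree_poleDenom : (poleDenom b).natDegree = 2 * k := by
  rw [poleDenom, natDegree_prod_of_monic _ _ fun _ _ => (monic_X_sub_C _).pow 2]
  simp [mul_comm]

theorem natDegree_poleCofactor (i : Fin k) : (poleCofactor b i).natDegree = 2 * (k - 1) := by
  rw [poleCofactor, natDegree_prod_of_monic _ _ fun _ _ => (monic_X_sub_C _).pow 2]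
  simp [card_erase_of_mem, mul_comm]

theorem eval_poleCofactor_self_ne_zero {b : Fin k → ℝ} (hb : Function.Injective b) (i : Fin k) :
    (poleCofactor b i).eval (b i) ≠ 0 := by
  simp only [poleCofactor, eval_prod, eval_pow, eval_sub, eval_X, eval_C]
  exact prod_ne_zero_iff.mpr fun i' hi' =>
    pow_ne_zero _ (sub_ne_zero.mpr fun h => (mem_erase.mp hi').1 (hb h).symm)

end Poles

def ratIndex (s k : ℕ) : Fin s ⊕ Fin k × Fin 2 ≃ Fin (s + 2 * k) :=
  (Equiv.sumCongr (Equiv.refl _) (finProdFinEquiv.trans (finCongr (mul_comm k 2)))).trans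
    finSumFinEquiv

section RatIndex

variable {s k : ℕ}

@[simp] theorem val_ratIndex_inl (a : Fin s) : (ratIndex s k (.inl a) : ℕ) = a := rfl

@[simp] theorem val_ratIndex_inr (i : Fin k) (e : Fin 2) :
    (ratIndex s k (.inr (i, e)) : ℕ) = s + (e + 2 * i) := rfl

variable (b : Fin k → ℝ) (t : ℝ)

theorem fRat_ratIndex_inl (a : Fin s) : fRat s k b (ratIndex s k (.inl a)) t = t ^ (a : ℕ) := by
  simp [fRat]

theorem fRat_ratIndex_inr_zero (i : Fin k) :
    fRat s k b (ratIndex s k (.inr (i, 0))) t = (t - b i)⁻¹ := by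
  simp [fRat]

theorem fRat_ratIndex_inr_one (i : Fin k) :
    fRat s k b (ratIndex s k (.inr (i, 1))) t = ((t - b i) ^ 2)⁻¹ := by
  have : (⟨(1 + 2 * i) / 2, by omega⟩ : Fin k) = i := Fin.ext (by simp only; omega)
  simp [fRat, this]

theorem sum_ratIndex_symm_mul_fRat (c : Fin s ⊕ Fin k × Fin 2 → ℝ) :
    ∑ p, c ((ratIndex s k).symm p) * fRat s k b p t =
      ∑ a : Fin s, c (.inl a) * t ^ (a : ℕ) +
        ∑ i, (c (.inr (i, 0)) * (t - b i)⁻¹ + c (.inr (i, 1)) * ((t - b i) ^ 2)⁻¹) := by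
  rw [← (ratIndex s k).sum_comp]
  simp [Fintype.sum_sum_type, Fintype.sum_prod_type, Fin.sum_univ_two, fRat_ratIndex_inl,
    fRat_ratIndex_inr_zero, fRat_ratIndex_inr_one]

end RatIndex

noncomputable def ratNumerator {s k : ℕ} (b : Fin k → ℝ) (c : Fin s ⊕ Fin k × Fin 2 → ℝ) :
    ℝ[X] :=
  (∑ a : Fin s, C (c (.inl a)) * X ^ (a : ℕ)) * poleDenom b +
    ∑ i, (C (c (.inr (i, 0))) * (X - C (b i)) + C (c (.inr (i, 1)))) * poleCofactor b i

section RatNumerator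

variable {s k : ℕ} (b : Fin k → ℝ) (c : Fin s ⊕ Fin k × Fin 2 → ℝ)

theorem eval_ratNumerator {t : ℝ} (ht : ∀ i, t ≠ b i) :
    (ratNumerator b c).eval t =
      (poleDenom b).eval t * ∑ p, c ((ratIndex s k).symm p) * fRat s k b p t := by
  rw [sum_ratIndex_symm_mul_fRat, mul_add]
  simp only [ratNumerator, eval_add, eval_mul, eval_finsetSum, eval_C, eval_pow, eval_X, eval_sub]
  congr 1
  · ring
  · rw [mul_sum]
    refine sum_congr rfl fun i _ => ?_
    have := sub_ne_zero.mpr (ht i)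
    rw [poleDenom_eq b i, eval_mul]
    simp only [eval_pow, eval_sub, eval_X, eval_C]
    field_simp

theorem eval_ratNumerator_pole (i : Fin k) :
    (ratNumerator b c).eval (b i) = c (.inr (i, 1)) * (poleCofactor b i).eval (b i) ∧
      (ratNumerator b c).derivative.eval (b i) =
        c (.inr (i, 0)) * (poleCofactor b i).eval (b i) +
          c (.inr (i, 1)) * (poleCofactor b i).derivative.eval (b i) := by
  set term := (C (c (.inr (i, 0))) * (X - C (b i)) + C (c (.inr (i, 1)))) * poleCofactor b i
  have hdvd : (X - C (b i)) ^ 2 ∣ ratNumerator b c - term := by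
    rw [ratNumerator, add_sub_assoc, ← sum_erase_eq_sub (mem_univ i)]
    exact dvd_add (dvd_mul_of_dvd_right (poleDenom_eq b i ▸ dvd_mul_right _ _) _)
      (dvd_sum fun i' hi' =>
        dvd_mul_of_dvd_right (sq_dvd_poleCofactor b (mem_erase.mp hi').1.symm) _)
  obtain ⟨h0, h1⟩ := eval_eq_zero_and_eval_derivative_eq_zero_of_sq_dvd hdvd
  rw [derivative_sub] at h1
  rw [eval_sub, sub_eq_zero] at h0 h1
  rw [h0, h1]
  simp [term, derivative_mul]

end RatNumerator

theorem exists_ratNumerator_eq {s k : ℕ} {b : Fin k → ℝ} (hb : Function.Injective b) {q : ℝ[X]}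
    (hq : q.degree < ↑(s + 2 * k)) : ∃ c : Fin s ⊕ Fin k × Fin 2 → ℝ, ratNumerator b c = q := by
  obtain ⟨Q, r, hr, hqQ⟩ := eq_quo_mul_prod_pow_add_sum_rem_mul_prod_pow (s := univ) q
    (g := fun i => X - C (b i)) (fun i _ => monic_X_sub_C _)
    (fun i _ i' _ h => pairwise_coprime_X_sub_C hb h) (fun _ => 2)
  have hrC : ∀ i e, r i e = C ((r i e).coeff 0) := fun i e =>
    eq_C_of_degree_le_zero (Nat.WithBot.lt_one_iff_le_zero.mp (by simpa using hr i (mem_univ _) e))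
  set R := ∑ i, (C ((r i 1).coeff 0) * (X - C (b i)) + C ((r i 0).coeff 0)) * poleCofactor b i
  have hqR : q = Q * poleDenom b + R := by
    rw [hqQ]
    congr 1
    refine sum_congr rfl fun i _ => ?_
    rw [Fin.sum_univ_two, hrC i 0, hrC i 1]
    simp only [poleCofactor, Fin.val_zero, Fin.val_one, pow_zero, pow_one, coeff_C_zero]
    ring
  have hR : R.degree < ↑(2 * k) := by
    refine (degree_sum_le _ _).trans_lt
      ((Finset.sup_lt_iff (WithBot.bot_lt_coe _)).mpr fun i _ => ?_)
    calc _ ≤ (C ((r i 1).coeff 0) * (X - C (b i)) + C ((r i 0).coeff 0)).degree +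
          (poleCofactor b i).degree := degree_mul_le _ _
      _ ≤ 1 + ↑(2 * (k - 1)) := by
          gcongr
          · compute_degree!
          · rw [degree_eq_natDegree (monic_poleCofactor b i).ne_zero, natDegree_poleCofactor]
      _ < ↑(2 * k) := by
          have := i.pos
          norm_cast
          omega
  have hQ : Q.degree < s := by
    have h : (Q * poleDenom b).degree < ↑(s + 2 * k) := by
      rw [show Q * poleDenom b = q - R by rw [hqR]; ring]
      exact (degree_sub_le _ _).trans_lt (max_lt hq (hR.trans_le (by exact_mod_cast (by omega))))
    rw [degree_mul, degree_eq_natDegree (monic_poleDenom b).ne_zero, natDegree_poleDenom,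
      Nat.cast_add] at h
    exact lt_of_add_lt_add_right h
  -- `r i e` multiplies `(X - C (b i)) ^ e`, whereas index `(i, e)` of `ratNumerator` carries
  -- the power `1 - e`.
  refine ⟨Sum.elim (fun a => Q.coeff a) (fun p => (r p.1 p.2.rev).coeff 0), ?_⟩
  rw [hqR, ratNumerator]
  simp [sum_fin_C_coeff_mul_X_pow hQ, R]

/-- `∏ₗ (X - xₗ)` and `poleCofactor b j` have the same logarithmic derivative at `b j`. -/
def IsBalanced {k n : ℕ} (b : Fin k → ℝ) (j : Fin k) (x : Fin n → ℝ) : Prop :=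
  ∑ l, (b j - x l)⁻¹ = ∑ i ∈ univ.erase j, 2 * (b j - b i)⁻¹

theorem coeff_inr_zero_eq_zero_of_isBalanced {s k n : ℕ} {b : Fin k → ℝ}
    (hb : Function.Injective b) {x : Fin n → ℝ} {j : Fin k} (hxb : ∀ l, x l ≠ b j)
    {c : Fin s ⊕ Fin k × Fin 2 → ℝ} (hc : ratNumerator b c = ∏ l, (X - C (x l)))
    (hbal : IsBalanced b j x) : c (.inr (j, 0)) = 0 := by
  set E := poleCofactor b j
  obtain ⟨hq, hq'⟩ := eval_ratNumerator_pole b c j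
  rw [hc] at hq hq'
  have hlogq : (∏ l, (X - C (x l))).derivative.eval (b j) =
      (∏ l, (X - C (x l))).eval (b j) * ∑ l, (b j - x l)⁻¹ := by
    simpa using eval_derivative_prod_X_sub_C_pow univ x 1 fun l _ => (hxb l).symm
  have hlogE :
      E.derivative.eval (b j) = E.eval (b j) * ∑ i ∈ univ.erase j, 2 * (b j - b i)⁻¹ := by
    simpa [E, poleCofactor] using eval_derivative_prod_X_sub_C_pow (univ.erase j) b 2
      fun i hi h => (mem_erase.mp hi).1 (hb h).symm
  have h : c (.inr (j, 0)) * E.eval (b j) = 0 :=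
    calc c (.inr (j, 0)) * E.eval (b j)
        = (∏ l, (X - C (x l))).derivative.eval (b j) -
            c (.inr (j, 1)) * E.derivative.eval (b j) := by
          rw [hq']; ring
      _ = c (.inr (j, 1)) * E.eval (b j) *
          (∑ l, (b j - x l)⁻¹ - ∑ i ∈ univ.erase j, 2 * (b j - b i)⁻¹) := by
          rw [hlogq, hq, hlogE]; ring
      _ = 0 := by rw [hbal, sub_self, mul_zero]
  exact (mul_eq_zero.mp h).resolve_right (eval_poleCofactor_self_ne_zero hb j)

theorem not_isChebyshevSystemIdx_fRat_of_isBalanced {s k : ℕ} {b : Fin k → ℝ}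
    (hb : Function.Injective b) {j : Fin k} {r : Fin (s + 2 * k)} (hr : (r : ℕ) = s + 2 * j)
    {I : Set ℝ} (hbI : ∀ i, b i ∉ I) {x : Fin (Fintype.card {p // p ≠ r}) → ℝ}
    (hx : StrictMono x) (hxI : ∀ l, x l ∈ I) (hbal : IsBalanced b j x) :
    ¬ IsChebyshevSystemIdx (fun p : {p : Fin (s + 2 * k) // p ≠ r} => fRat s k b p.val) I := by
  have hr' : r = ratIndex s k (.inr (j, 0)) :=
    Fin.ext (by simp only [hr, val_ratIndex_inr]; simp)
  have hxb : ∀ i l, x l ≠ b i := fun i l h => hbI i (h ▸ hxI l)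
  set q : ℝ[X] := ∏ l, (X - C (x l))
  have hq : q.degree < ↑(s + 2 * k) := by
    rw [degree_eq_natDegree (monic_prod_of_monic _ _ fun _ _ => monic_X_sub_C _).ne_zero,
      natDegree_finsetProd_X_sub_C_eq_card]
    have := j.pos
    simp only [card_univ, ne_eq, Fintype.card_subtype_compl, Fintype.card_fin,
      Fintype.card_unique]
    exact_mod_cast (by omega : s + 2 * k - 1 < s + 2 * k)
  obtain ⟨c, hc⟩ := exists_ratNumerator_eq hb hq
  have hA := coeff_inr_zero_eq_zero_of_isBalanced hb (fun l => hxb j l) hc hbal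
  have hB : c (.inr (j, 1)) ≠ 0 := by
    have hqb : q.eval (b j) ≠ 0 := by
      simp only [q, eval_prod, eval_sub, eval_X, eval_C]
      exact prod_ne_zero_iff.mpr fun l _ => sub_ne_zero.mpr (hxb j l).symm
    rw [← hc, (eval_ratNumerator_pole b c j).1] at hqb
    exact left_ne_zero_of_mul hqb
  refine not_isChebyshevSystemIdx_of_sum_eq_zero hx hxI
    (c := fun p => c ((ratIndex s k).symm p)) (fun h => hB ?_) fun l => ?_
  · simpa using congrFun h ⟨ratIndex s k (.inr (j, 1)), by simp [hr']⟩
  · have hD : (poleDenom b).eval (x l) ≠ 0 := by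
      simp only [poleDenom, eval_prod, eval_pow, eval_sub, eval_X, eval_C]
      exact prod_ne_zero_iff.mpr fun i _ => pow_ne_zero _ (sub_ne_zero.mpr (hxb i l))
    have hql : q.eval (x l) = 0 := by
      simp only [q, eval_prod, eval_sub, eval_X, eval_C]
      exact prod_eq_zero (mem_univ l) (sub_self _)
    rw [← hc, eval_ratNumerator b c fun i => hxb i l, Fintype.sum_eq_add_sum_subtype_ne _ r] at hql
    simpa [hr', hA, hD] using hql

theorem exists_injective_sum_two_mul_inv_sub_eq {k : ℕ} (hk : 2 ≤ k) (j : Fin k) (u σ : ℝ)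
    (hσ : σ < 0) :
    ∃ b : Fin k → ℝ, Function.Injective b ∧ b j = u ∧ (∀ i, b i ≤ u - 2 / σ) ∧
      ∑ i ∈ univ.erase j, 2 * (u - b i)⁻¹ = σ := by
  have : Nontrivial (Fin k) := Fin.nontrivial_iff_two_le.mpr hk
  obtain ⟨i₀, hi₀⟩ := exists_ne j
  -- The poles other than `b j` and `b i₀` lie below `u` and contribute `2 * T ≥ 0`;
  -- `b i₀ = u + δ` above `u` makes up the difference.
  set T := ∑ i ∈ (univ.erase j).erase i₀, (1 + (i : ℝ))⁻¹
  have hT : 0 ≤ T := sum_nonneg fun i _ => by positivity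
  set δ := 2 / (2 * T - σ)
  have hδ : 0 < δ := div_pos two_pos (by linarith)
  have hδσ : δ ≤ -(2 / σ) := by
    rw [← div_neg]
    exact div_le_div_of_nonneg_left zero_le_two (by linarith) (by linarith)
  refine ⟨fun i => if i = j then u else if i = i₀ then u + δ else u - 1 - i, ?_, by simp, ?_, ?_⟩
  · intro p q h
    have hp : (0 : ℝ) ≤ p := by positivity
    have hq : (0 : ℝ) ≤ q := by positivity
    simp only at h
    split_ifs at h <;>
      first
      | (subst_vars; rfl)
      | (exfalso; linarith)
      | exact Fin.val_injective (Nat.cast_injective (R := ℝ) (by linarith))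
  · have h2σ : 0 < -(2 / σ) := by rw [← div_neg]; exact div_pos two_pos (by linarith)
    intro i
    have hi : (0 : ℝ) ≤ i := by positivity
    dsimp only
    split_ifs <;> linarith
  · dsimp only
    rw [← add_sum_erase _ _ (mem_erase.mpr ⟨hi₀, mem_univ _⟩), if_neg hi₀, if_pos rfl]
    have hrest : ∑ i ∈ (univ.erase j).erase i₀,
        2 * (u - if i = j then u else if i = i₀ then u + δ else u - 1 - i)⁻¹ = 2 * T := by
      rw [mul_sum]
      refine sum_congr rfl fun i hi => ?_
      obtain ⟨hi₀, hij⟩ : i ≠ i₀ ∧ i ≠ j := by simp_all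
      simp only [hi₀, hij, if_false]
      ring_nf
    rw [hrest, sub_add_cancel_left, inv_neg, inv_div]
    ring

theorem exists_injective_isBalanced_lt {k n : ℕ} (hk : 2 ≤ k) (j : Fin k) (hn : 3 ≤ n)
    {m c : ℝ} {x : Fin n → ℝ} (hx : ∀ l, x l ∈ Set.Icc m c) :
    ∃ b : Fin k → ℝ, Function.Injective b ∧ (∀ i, b i < m) ∧ IsBalanced b j x := by
  have hmc : m ≤ c := (hx ⟨0, by omega⟩).1.trans (hx _).2
  -- With `S * (c - u) ≥ 3` below, this choice gives `2 / S ≤ 2 * (c - u) / 3 < m - u`.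
  set u := 3 * m - 2 * c - 1
  have hxu : ∀ l, 0 < x l - u := fun l => by linarith [(hx l).1]
  set S := ∑ l, (x l - u)⁻¹
  have hS : 0 < S :=
    sum_pos (fun l _ => inv_pos.mpr (hxu l)) (univ_nonempty_iff.mpr ⟨⟨0, by omega⟩⟩)
  have hSc : 3 ≤ S * (c - u) := by
    have hterm : ∀ l, (c - u)⁻¹ ≤ (x l - u)⁻¹ :=
      fun l => inv_anti₀ (hxu l) (by linarith [(hx l).2])
    calc (3 : ℝ) ≤ n := by exact_mod_cast hn
      _ = (∑ _l : Fin n, (c - u)⁻¹) * (c - u) := by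
        rw [sum_const, card_univ, Fintype.card_fin, nsmul_eq_mul, mul_assoc,
          inv_mul_cancel₀ (by linarith), mul_one]
      _ ≤ S * (c - u) := by
        gcongr
        · linarith
        · exact sum_le_sum fun l _ => hterm l
  obtain ⟨b, hb, hbj, hbu, hbal⟩ :=
    exists_injective_sum_two_mul_inv_sub_eq hk j u (-S) (by linarith)
  refine ⟨b, hb, fun i => (hbu i).trans_lt ?_, ?_⟩
  · rw [div_neg, sub_neg_eq_add, ← lt_sub_iff_add_lt', div_lt_iff₀ hS]
    have : (m - u) * S = 2 / 3 * (S * (c - u)) + S / 3 := by simp only [u]; ring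
    linarith
  · rw [IsBalanced, hbj, hbal, ← sum_neg_distrib]
    simp only [← inv_neg, neg_sub]

/-- for `k ≥ 2` there exists `b ∈ ℬ` such that the rational system
with the function `1/(t−b_j)` removed is NOT a Chebyshev system on `I`. -/
theorem stmt12 (s k : ℕ) (hk : 2 ≤ k) (I : Set ℝ) (hI : I.OrdConnected)
    (hIb : Bornology.IsBounded I ∨ I ⊆ Set.Ici 0)
    (hne : ∃ a c : ℝ, a < c ∧ a ∈ I ∧ c ∈ I)
    (j : Fin k) :
    ∃ b : Fin k → ℝ, (∀ i, b i ∉ I) ∧ Function.Injective b ∧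
      ¬ IsChebyshevSystemIdx
        (fun p : {i : Fin (s + 2 * k) //
            i ≠ (⟨s + 2 * j.val, by have := j.isLt; omega⟩ : Fin (s + 2 * k))} =>
          fRat s k b p.val) I := by
  obtain ⟨a, c, hac, haI, hcI⟩ := hne
  obtain ⟨m, hm⟩ : BddBelow I := hIb.elim Bornology.IsBounded.bddBelow fun h => ⟨0, h⟩
  obtain ⟨x, hx, hxac⟩ := exists_strictMono_fin_Icc hac
    (Fintype.card {p : Fin (s + 2 * k) // p ≠ ⟨s + 2 * j.val, by omega⟩})
  have hxI : ∀ l, x l ∈ I := fun l => hI.out haI hcI (hxac l)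
  obtain ⟨b, hb, hbm, hbal⟩ := exists_injective_isBalanced_lt hk j
    (by simp only [ne_eq, Fintype.card_subtype_compl, Fintype.card_fin, Fintype.card_unique]; omega)
    fun l => ⟨(hm haI).trans (hxac l).1, (hxac l).2⟩
  have hbI : ∀ i, b i ∉ I := fun i hi => (hbm i).not_ge (hm hi)
  exact ⟨b, hbI, hb, not_isChebyshevSystemIdx_fRat_of_isBalanced hb rfl hbI hx hxI hbal⟩
end

section
/- Let b < 0 and define g(t) = (1+√2)(−b)·(−2)/(t−b) + (1+√2)² b² / (t−b)² for t ≥ 0. Then |g(t)| ≤ 1 for all t ∈ [0,∞), g(0) = 1, and g(−√2·b) = −1. In particular, the function g is a Chebyshev polynomial of the system {1/(t−b), 1/(t−b)²} on [0,∞), with Chebyshev points s_1 = 0 and s_2 = −√2·b = √2|b|. -/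
/-- for `b < 0` the function
`g(t) = (1+√2)(−b)(−2)/(t−b) + (1+√2)² b²/(t−b)²` satisfies `|g| ≤ 1` on `[0,∞)`,
`g(0) = 1` and `g(−√2 b) = −1`; hence it is the Chebyshev polynomial of the system
`{1/(t−b), 1/(t−b)²}` on `[0,∞)` with Chebyshev points `0 < √2 |b|`. -/
theorem stmt17 (b : ℝ) (hb : b < 0)
    (g : ℝ → ℝ)
    (hg : g = fun t => (1 + Real.sqrt 2) * (-b) * (-2) / (t - b) +
      (1 + Real.sqrt 2) ^ 2 * b ^ 2 / (t - b) ^ 2) :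
    (∀ t ∈ Set.Ici (0 : ℝ), |g t| ≤ 1) ∧
    g 0 = 1 ∧
    g (-(Real.sqrt 2) * b) = -1 ∧
    (0 : ℝ) < -(Real.sqrt 2) * b := by
  have hs : Real.sqrt 2 ^ 2 = 2 := Real.sq_sqrt (by norm_num)
  have hs1 : (1 : ℝ) ≤ Real.sqrt 2 := by nlinarith [Real.sqrt_nonneg 2]
  have hb' : b ≠ 0 := ne_of_lt hb
  have hnb : (0:ℝ) < -b := by linarith
  subst hg
  refine ⟨?_, ?_, ?_, ?_⟩
  · intro t ht
    simp only [Set.mem_Ici] at ht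
    have hd : (0 : ℝ) < t - b := by linarith
    set c := 1 + Real.sqrt 2 with hc
    set x := (-b) / (t - b) with hx
    have hx0 : 0 < x := div_pos hnb hd
    have hx1 : x ≤ 1 := by rw [hx, div_le_one hd]; linarith
    have hc0 : 0 < c := by rw [hc]; linarith
    have hrw : c * (-b) * (-2) / (t - b) + c ^ 2 * b ^ 2 / (t - b) ^ 2
        = c ^ 2 * x ^ 2 - 2 * (c * x) := by
      rw [hx]; field_simp; ring
    simp only [hrw]
    rw [abs_le]
    have hy0 : 0 < c * x := mul_pos hc0 hx0
    have hcx : c * x ≤ c := by nlinarith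
    have h1 : 0 ≤ c - c * x := by linarith
    have h2 : 0 ≤ Real.sqrt 2 + c * x - 1 := by linarith
    constructor
    · nlinarith [sq_nonneg (c * x - 1)]
    · nlinarith [mul_nonneg h1 h2, hc, hs]
  · have e : (1 + Real.sqrt 2) * (-b) * (-2) / ((0:ℝ) - b) +
        (1 + Real.sqrt 2) ^ 2 * b ^ 2 / ((0:ℝ) - b) ^ 2
        = (1 + Real.sqrt 2) ^ 2 - 2 * (1 + Real.sqrt 2) := by
      field_simp
      ring
    simp only [e]
    linear_combination hs
  · have hdd : -(Real.sqrt 2) * b - b = (1 + Real.sqrt 2) * (-b) := by ring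
    have hc0 : (1 + Real.sqrt 2) * (-b) ≠ 0 :=
      ne_of_gt (mul_pos (by linarith) hnb)
    simp only [hdd]
    have e : (1 + Real.sqrt 2) * (-b) * (-2) / ((1 + Real.sqrt 2) * (-b)) +
        (1 + Real.sqrt 2) ^ 2 * b ^ 2 / ((1 + Real.sqrt 2) * (-b)) ^ 2 = -1 := by
      field_simp
      ring
    exact e
  · nlinarith
end

section
/- Let b < 0 and f(t) = (1/(t−b), 1/(t−b)²)ᵀ for t ∈ [0,∞). Let ξ* be the design assigning mass w₁ = (2−√2)(6−4√2+b²) / (2(b²+12−8√2)) to the point 0 and mass 1−w₁ to the point −√2·b = √2|b|. Then ξ* is E-optimal: for every design η on [0,∞), the smallest eigenvalue of M(η) is at most the smallest eigenvalue of M(ξ*). -/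
open Matrix Finset

/-!
Put `r = √2 - 1` (so `r² + 2r = 1`) and `v = (2r, b)`. With `u = t - b`, the identities
`r²u² + b(2ru + b) = (ru + b)²` and `r²u² - b(2ru + b) = t (r²u - b)` show that
`(f(t) ⬝ v)² = (2ru + b)² / u⁴ ≤ r⁴ / b²` for `t ≥ 0`, with equality exactly at `t = 0` and
`t = -√2 b`. Averaging over a design `η` gives `vᵀ M(η) v ≤ r⁴ / b²`, so by the Rayleigh bound
`λ_min(M(η)) ≤ r⁴ / (b² ‖v‖²)`. The weight `w₁` is the one that makes `v` an eigenvector of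
`M(ξ*)` for this value, and it is the smaller eigenvalue because it is at most half the trace.
-/

theorem isEigenvalue_iff_det_sub_eq_zero {m : ℕ} (M : Matrix (Fin m) (Fin m) ℝ) (r : ℝ) :
    IsEigenvalue M r ↔ (M - r • 1).det = 0 := by
  rw [← exists_mulVec_eq_zero_iff]
  simp only [IsEigenvalue, sub_mulVec, smul_mulVec, one_mulVec, sub_eq_zero]

namespace Matrix

variable {M : Matrix (Fin 2) (Fin 2) ℝ}

theorem isEigenvalue_fin_two_iff (r : ℝ) :
    IsEigenvalue M r ↔ (M 0 0 - r) * (M 1 1 - r) = M 0 1 * M 1 0 := by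
  rw [isEigenvalue_iff_det_sub_eq_zero, det_fin_two, sub_eq_zero]
  simp

theorem IsSymm.isEigenvalue_fin_two_iff (hM : M.IsSymm) (r : ℝ) :
    IsEigenvalue M r ↔ (2 * r - M.trace) ^ 2 = (M 0 0 - M 1 1) ^ 2 + 4 * M 0 1 ^ 2 := by
  rw [Matrix.isEigenvalue_fin_two_iff, hM.apply 0 1, trace_fin_two]
  constructor <;> intro h
  · linear_combination 4 * h
  · linear_combination h / 4

theorem IsSymm.isEigenvalue_fin_two_lower (hM : M.IsSymm) :
    IsEigenvalue M ((M.trace - √((M 0 0 - M 1 1) ^ 2 + 4 * M 0 1 ^ 2)) / 2) := by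
  rw [hM.isEigenvalue_fin_two_iff]
  linear_combination Real.sq_sqrt (by positivity : 0 ≤ (M 0 0 - M 1 1) ^ 2 + 4 * M 0 1 ^ 2)

theorem IsSymm.lambdaMin_fin_two (hM : M.IsSymm) :
    lambdaMin M = (M.trace - √((M 0 0 - M 1 1) ^ 2 + 4 * M 0 1 ^ 2)) / 2 := by
  have hlower : ∀ r ∈ {r | IsEigenvalue M r},
      (M.trace - √((M 0 0 - M 1 1) ^ 2 + 4 * M 0 1 ^ 2)) / 2 ≤ r := by
    intro r (hr : IsEigenvalue M r)
    rw [hM.isEigenvalue_fin_two_iff] at hr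
    rw [← hr, Real.sqrt_sq_eq_abs]
    linarith [neg_abs_le (2 * r - M.trace)]
  exact le_antisymm (csInf_le ⟨_, hlower⟩ hM.isEigenvalue_fin_two_lower)
    (le_csInf ⟨_, hM.isEigenvalue_fin_two_lower⟩ hlower)

theorem IsSymm.dotProduct_mulVec_fin_two (hM : M.IsSymm) (v : Fin 2 → ℝ) :
    v ⬝ᵥ M *ᵥ v = M 0 0 * v 0 ^ 2 + 2 * M 0 1 * v 0 * v 1 + M 1 1 * v 1 ^ 2 := by
  simp only [dotProduct, mulVec, Fin.sum_univ_two, hM.apply 0 1]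
  ring

theorem IsSymm.dotProduct_mulVec_nonneg_fin_two (hM : M.IsSymm) (h₀ : 0 ≤ M 0 0)
    (h₁ : 0 ≤ M 1 1) (hdet : 0 ≤ M.det) (v : Fin 2 → ℝ) : 0 ≤ v ⬝ᵥ M *ᵥ v := by
  rw [det_fin_two, hM.apply 0 1] at hdet
  rw [hM.dotProduct_mulVec_fin_two]
  rcases h₀.eq_or_lt with h₀ | h₀
  · have : M 0 1 = 0 := by nlinarith
    rw [← h₀, this]
    nlinarith [mul_nonneg h₁ (sq_nonneg (v 1))]
  · -- `M 0 0 * (vᵀ M v) = (M 0 0 * v 0 + M 0 1 * v 1) ^ 2 + det M * v 1 ^ 2`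
    refine nonneg_of_mul_nonneg_right ?_ h₀
    nlinarith [sq_nonneg (M 0 0 * v 0 + M 0 1 * v 1), mul_nonneg hdet (sq_nonneg (v 1))]

theorem IsSymm.lambdaMin_mul_dotProduct_le (hM : M.IsSymm) (v : Fin 2 → ℝ) :
    lambdaMin M * (v ⬝ᵥ v) ≤ v ⬝ᵥ M *ᵥ v := by
  have hformula := hM.lambdaMin_fin_two
  have hρ : IsEigenvalue M (lambdaMin M) := hformula ▸ hM.isEigenvalue_fin_two_lower
  set ρ := lambdaMin M
  have hdiag : |M 0 0 - M 1 1| ≤ √((M 0 0 - M 1 1) ^ 2 + 4 * M 0 1 ^ 2) := by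
    rw [← Real.sqrt_sq_eq_abs]
    exact Real.sqrt_le_sqrt (le_add_of_nonneg_right (by positivity))
  have hρ_le : ρ ≤ M 0 0 ∧ ρ ≤ M 1 1 := by
    rw [hformula, trace_fin_two]
    constructor <;> linarith [abs_le.1 hdiag]
  have hshift : 0 ≤ v ⬝ᵥ (M - ρ • 1) *ᵥ v :=
    (hM.sub (isSymm_one.smul ρ)).dotProduct_mulVec_nonneg_fin_two (by simp [hρ_le.1])
      (by simp [hρ_le.2]) ((isEigenvalue_iff_det_sub_eq_zero M ρ).1 hρ).ge v
  rwa [sub_mulVec, smul_mulVec, one_mulVec, dotProduct_sub, dotProduct_smul, smul_eq_mul,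
    sub_nonneg] at hshift

theorem IsSymm.lambdaMin_eq_of_mulVec_eq {v : Fin 2 → ℝ} {r : ℝ} (hM : M.IsSymm) (hv : v ≠ 0)
    (hMv : M *ᵥ v = r • v) (hr : 2 * r ≤ M.trace) : lambdaMin M = r := by
  have hchar := (hM.isEigenvalue_fin_two_iff r).1 ⟨v, hv, hMv⟩
  rw [hM.lambdaMin_fin_two, ← hchar, Real.sqrt_sq_eq_abs, abs_of_nonpos (by linarith)]
  ring

end Matrix

namespace Design

variable (ξ : Design)

theorem isSymm_infoMatrix {m : ℕ} (f : ℝ → Fin m → ℝ) : (ξ.infoMatrix f).IsSymm := by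
  simp [Matrix.IsSymm, infoMatrix, transpose_sum]

theorem dotProduct_infoMatrix_mulVec {m : ℕ} (f : ℝ → Fin m → ℝ) (v : Fin m → ℝ) :
    v ⬝ᵥ ξ.infoMatrix f *ᵥ v = ∑ t ∈ ξ.support, ξ.weight t * (f t ⬝ᵥ v) ^ 2 := by
  simp only [infoMatrix, sum_mulVec, smul_mulVec, vecMulVec_mulVec, dotProduct_sum,
    dotProduct_smul, smul_eq_mul, op_smul_eq_smul, dotProduct_comm v (f _), sq]

theorem dotProduct_infoMatrix_mulVec_le {m : ℕ} (f : ℝ → Fin m → ℝ) {v : Fin m → ℝ} {c : ℝ}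
    (h : ∀ t ∈ ξ.support, (f t ⬝ᵥ v) ^ 2 ≤ c) : v ⬝ᵥ ξ.infoMatrix f *ᵥ v ≤ c :=
  calc v ⬝ᵥ ξ.infoMatrix f *ᵥ v = ∑ t ∈ ξ.support, ξ.weight t * (f t ⬝ᵥ v) ^ 2 :=
        ξ.dotProduct_infoMatrix_mulVec f v
    _ ≤ ∑ t ∈ ξ.support, ξ.weight t * c :=
        sum_le_sum fun t ht => mul_le_mul_of_nonneg_left (h t ht) (ξ.pos t ht).le
    _ = c := by rw [← sum_mul, ξ.sum_one, one_mul]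

theorem lambdaMin_infoMatrix_le_s18 (f : ℝ → Fin 2 → ℝ) {v : Fin 2 → ℝ} (hv : v ≠ 0) {c : ℝ}
    (h : ∀ t ∈ ξ.support, (f t ⬝ᵥ v) ^ 2 ≤ c * (v ⬝ᵥ v)) : lambdaMin (ξ.infoMatrix f) ≤ c := by
  have hvv : 0 < v ⬝ᵥ v := lt_of_le_of_ne (sum_nonneg fun i _ => mul_self_nonneg (v i))
    (Ne.symm (dotProduct_self_eq_zero.not.mpr hv))
  refine le_of_mul_le_mul_right ?_ hvv
  exact ((ξ.isSymm_infoMatrix f).lambdaMin_mul_dotProduct_le v).trans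
    (ξ.dotProduct_infoMatrix_mulVec_le f h)

end Design

noncomputable def twoPointInfoMatrix {m : ℕ} (f : ℝ → Fin m → ℝ) (w t₁ t₂ : ℝ) :
    Matrix (Fin m) (Fin m) ℝ :=
  w • vecMulVec (f t₁) (f t₁) + (1 - w) • vecMulVec (f t₂) (f t₂)

section TwoPoint

variable {m : ℕ} (f : ℝ → Fin m → ℝ) (w t₁ t₂ : ℝ)

theorem isSymm_twoPointInfoMatrix : (twoPointInfoMatrix f w t₁ t₂).IsSymm := by
  simp [Matrix.IsSymm, twoPointInfoMatrix]

theorem twoPointInfoMatrix_mulVec (v : Fin m → ℝ) :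
    twoPointInfoMatrix f w t₁ t₂ *ᵥ v =
      (w * (f t₁ ⬝ᵥ v)) • f t₁ + ((1 - w) * (f t₂ ⬝ᵥ v)) • f t₂ := by
  simp only [twoPointInfoMatrix, add_mulVec, smul_mulVec, vecMulVec_mulVec, op_smul_eq_smul,
    smul_smul]

theorem trace_twoPointInfoMatrix :
    (twoPointInfoMatrix f w t₁ t₂).trace = w * (f t₁ ⬝ᵥ f t₁) + (1 - w) * (f t₂ ⬝ᵥ f t₂) := by
  simp [twoPointInfoMatrix, trace_vecMulVec]

end TwoPoint

noncomputable def regressor (b t : ℝ) : Fin 2 → ℝ := ![(t - b)⁻¹, ((t - b) ^ 2)⁻¹]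

section Regressor

variable {b r w : ℝ}

theorem regressor_dotProduct (t : ℝ) (v : Fin 2 → ℝ) :
    regressor b t ⬝ᵥ v = ((t - b) * v 0 + v 1) / (t - b) ^ 2 := by
  simp only [regressor, dotProduct, Fin.sum_univ_two, Matrix.cons_val_zero, Matrix.cons_val_one]
  rcases eq_or_ne (t - b) 0 with h | h
  · simp [h]
  · field_simp

theorem sq_regressor_dotProduct_le (hb : b < 0) (hr : r ^ 2 + 2 * r = 1) {t : ℝ}
    (ht : 0 ≤ t) : (regressor b t ⬝ᵥ ![2 * r, b]) ^ 2 ≤ r ^ 4 / b ^ 2 := by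
  have hu : 0 < t - b := by linarith
  have hlow : -(r ^ 2 * (t - b) ^ 2) ≤ b * (2 * r * (t - b) + b) := by
    nlinarith [sq_nonneg (r * (t - b) + b)]
  have hupp : b * (2 * r * (t - b) + b) ≤ r ^ 2 * (t - b) ^ 2 := by
    have : r ^ 2 * (t - b) ^ 2 - b * (2 * r * (t - b) + b) = t * (r ^ 2 * (t - b) - b) := by
      linear_combination -(b * (t - b)) * hr
    have : 0 ≤ r ^ 2 * (t - b) - b := by nlinarith [mul_nonneg (sq_nonneg r) hu.le]
    nlinarith [mul_nonneg ht this]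
  have hsq := sq_le_sq' hlow hupp
  rw [regressor_dotProduct, div_pow, div_le_div_iff₀ (by positivity) (sq_pos_of_neg hb)]
  simp only [Matrix.cons_val_zero, Matrix.cons_val_one]
  linear_combination hsq

theorem regressor_zero : regressor b 0 = ![-b⁻¹, (b ^ 2)⁻¹] := by
  simp [regressor]

theorem regressor_neg_add_one_mul (hb : b ≠ 0) (hr : r ^ 2 + 2 * r = 1) :
    regressor b (-(r + 1) * b) = ![-r / b, r ^ 2 / b ^ 2] := by
  have hrb : -(r + 1) * b - b = -(b / r) := by
    have hr₀ : r ≠ 0 := by rintro rfl; norm_num at hr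
    field_simp
    linear_combination -hr
  rw [regressor, hrb]
  simp [div_pow, neg_div]

theorem twoPointInfoMatrix_regressor_mulVec (hb : b ≠ 0) (hr : r ^ 2 + 2 * r = 1)
    (hw : w = (1 - r) * (2 * r ^ 2 + b ^ 2) / (2 * (b ^ 2 + 4 * r ^ 2))) :
    twoPointInfoMatrix (regressor b) w 0 (-(r + 1) * b) *ᵥ ![2 * r, b] =
      (r ^ 4 / (b ^ 2 * (b ^ 2 + 4 * r ^ 2))) • ![2 * r, b] := by
  rw [twoPointInfoMatrix_mulVec, regressor_zero, regressor_neg_add_one_mul hb hr]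
  ext i
  fin_cases i <;>
    simp only [hw, dotProduct, Fin.sum_univ_two, cons_val_zero, cons_val_one, cons_val_fin_one,
      Pi.add_apply, Pi.smul_apply, smul_eq_mul, Fin.zero_eta, Fin.mk_one] <;>
    field_simp
  · linear_combination (b ^ 2 + 2 * r ^ 2) * (1 - r + r ^ 2) * hr
  · linear_combination -(b ^ 2 + 2 * r ^ 2) * (1 - r + r ^ 2 + r ^ 3) * hr

theorem two_mul_le_trace_twoPointInfoMatrix_regressor (hb : b ≠ 0) (hr : r ^ 2 + 2 * r = 1)
    (hr₀ : 0 < r) (hw₀ : 0 ≤ w) :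
    2 * (r ^ 4 / (b ^ 2 * (b ^ 2 + 4 * r ^ 2))) ≤
      (twoPointInfoMatrix (regressor b) w 0 (-(r + 1) * b)).trace := by
  have hb₂ : 0 < b ^ 2 := by positivity
  have hr₂ : 0 ≤ 1 - r ^ 2 := by nlinarith
  have hr₄ : 0 ≤ 1 - r ^ 4 := by nlinarith
  calc 2 * (r ^ 4 / (b ^ 2 * (b ^ 2 + 4 * r ^ 2))) ≤ r ^ 2 / b ^ 2 := by
        rw [mul_div_assoc', div_le_div_iff₀ (by positivity) hb₂]
        nlinarith [mul_nonneg (mul_nonneg (sq_nonneg r) hb₂.le) hb₂.le,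
          mul_nonneg (pow_pos hr₀ 4).le hb₂.le]
    _ ≤ r ^ 2 / b ^ 2 + (w * (1 - r ^ 2) * b ^ 2 + (w * (1 - r ^ 4) + r ^ 4)) / (b ^ 2) ^ 2 :=
        le_add_of_nonneg_right (by positivity)
    _ = _ := by
        rw [trace_twoPointInfoMatrix, regressor_zero, regressor_neg_add_one_mul hb hr]
        simp only [dotProduct, Fin.sum_univ_two, cons_val_zero, cons_val_one, cons_val_fin_one]
        field_simp
        ring

theorem lambdaMin_twoPointInfoMatrix_regressor (hb : b ≠ 0) (hr : r ^ 2 + 2 * r = 1) (hr₀ : 0 < r)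
    (hw : w = (1 - r) * (2 * r ^ 2 + b ^ 2) / (2 * (b ^ 2 + 4 * r ^ 2))) :
    lambdaMin (twoPointInfoMatrix (regressor b) w 0 (-(r + 1) * b)) =
      r ^ 4 / (b ^ 2 * (b ^ 2 + 4 * r ^ 2)) := by
  have hw₀ : 0 ≤ w := by
    rw [hw]
    have : r ≤ 1 := by nlinarith
    positivity
  exact (isSymm_twoPointInfoMatrix _ _ _ _).lambdaMin_eq_of_mulVec_eq (by simp [hb])
    (twoPointInfoMatrix_regressor_mulVec hb hr hw)
    (two_mul_le_trace_twoPointInfoMatrix_regressor hb hr hr₀ hw₀)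

end Regressor

/-- for `b < 0` the two-point design with mass
`w₁ = (2−√2)(6−4√2+b²)/(2(b²+12−8√2))` at `0` and mass `1−w₁` at `√2|b|` is
E-optimal for `f(t) = (1/(t−b), 1/(t−b)²)ᵀ` on `[0,∞)`. -/
theorem stmt18 (b : ℝ) (hb : b < 0)
    (f : ℝ → Fin 2 → ℝ) (hf : f = fun t => ![(t - b)⁻¹, ((t - b) ^ 2)⁻¹])
    (w₁ : ℝ)
    (hw₁ : w₁ = (2 - Real.sqrt 2) * (6 - 4 * Real.sqrt 2 + b ^ 2) /
      (2 * (b ^ 2 + 12 - 8 * Real.sqrt 2)))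
    (Mstar : Matrix (Fin 2) (Fin 2) ℝ)
    (hM : Mstar = w₁ • Matrix.vecMulVec (f 0) (f 0) +
      (1 - w₁) • Matrix.vecMulVec (f (-(Real.sqrt 2) * b)) (f (-(Real.sqrt 2) * b))) :
    ∀ η : Design, ↑η.support ⊆ Set.Ici (0 : ℝ) →
      lambdaMin (η.infoMatrix f) ≤ lambdaMin Mstar := by
  intro η hη
  obtain ⟨r, hr_def⟩ : ∃ r, r = √2 - 1 := ⟨_, rfl⟩
  have hs : √2 = r + 1 := by linarith
  have hr : r ^ 2 + 2 * r = 1 := by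
    rw [hr_def]
    linear_combination Real.sq_sqrt (zero_le_two : (0 : ℝ) ≤ 2)
  have hr₀ : 0 < r := by linarith [Real.one_lt_sqrt_two]
  have hw : w₁ = (1 - r) * (2 * r ^ 2 + b ^ 2) / (2 * (b ^ 2 + 4 * r ^ 2)) := by
    rw [hw₁, hs]
    congr 1
    · linear_combination 2 * (r - 1) * hr
    · linear_combination -8 * hr
  have hf' : f = regressor b := hf
  have hMstar : Mstar = twoPointInfoMatrix (regressor b) w₁ 0 (-(r + 1) * b) := by
    rw [hM, hf', hs]
    rfl
  rw [hf', hMstar, lambdaMin_twoPointInfoMatrix_regressor hb.ne hr hr₀ hw]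
  refine η.lambdaMin_infoMatrix_le_s18 _ (v := ![2 * r, b]) (by simp [hb.ne]) fun t ht => ?_
  calc (regressor b t ⬝ᵥ ![2 * r, b]) ^ 2 ≤ r ^ 4 / b ^ 2 :=
        sq_regressor_dotProduct_le hb hr (hη ht)
    _ = _ := by
        simp only [dotProduct, Fin.sum_univ_two, cons_val_zero, cons_val_one, cons_val_fin_one]
        field_simp
        ring
end
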